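/- arXiv:2307.02769 — 4 statements merged into one kernel-verified Lean document; each statement's English description precedes it below -/
import Mathlib

section
/- Let G = A *_C B be an amalgamated free product. If an element a ∈ A is not conjugate in G to any element of C, and g ∈ G is conjugate in G to an element b ∈ B that is not conjugate to any element of C, then the product a·g is not conjugate in G to any element of A and not conjugate to any element of B. -/
/-!
STATEMENT 0: In an amalgamated free product `G = A *_C B`, if `a ∈ A` is not
conjugate in `G` to any element of `C`, and `g ∈ G` is conjugate in `G` to an
element `b ∈ B` that is not conjugate to any element of `C`, then `a * g` is not
conjugate in `G` to any element of `A` nor to any element of `B`.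

We model `A *_C B` as `Monoid.PushoutI φ` over the index type `Bool`
(`A = G true`, `B = G false`), with injective structure maps `φ i : C →* G i`.
-/

open Monoid CoprodI Function

namespace AmalgAux

variable {ι : Type*} {G : ι → Type*} [∀ i, Group (G i)] {H : Type*} [Group H]
  {φ : ∀ i, H →* G i}

/-- A `NeWord` is reduced (w.r.t. the amalgam) if no letter lies in the image of the base. -/
def NWRed (φ : ∀ i, H →* G i) {i j : ι} (w : NeWord G i j) : Prop :=
  ∀ l ∈ w.toList, l.2 ∉ (φ l.1).range

theorem nwred_singleton {i : ι} {x : G i} (hx : x ∉ (φ i).range) (h1 : x ≠ 1) :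
    NWRed φ (NeWord.singleton x h1) := by
  intro l hl
  simp only [NeWord.toList, List.mem_singleton] at hl
  subst hl; exact hx

theorem nwred_append {i j k l : ι} {w₁ : NeWord G i j} {w₂ : NeWord G k l} (hne : j ≠ k)
    (h₁ : NWRed φ w₁) (h₂ : NWRed φ w₂) : NWRed φ (NeWord.append w₁ hne w₂) := by
  intro x hx
  simp only [NeWord.toList, List.mem_append] at hx
  rcases hx with hx | hx
  · exact h₁ x hx
  · exact h₂ x hx

theorem NWRed.of_append_left {i j k l : ι} {w₁ : NeWord G i j} {w₂ : NeWord G k l} {hne : j ≠ k}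
    (h : NWRed φ (NeWord.append w₁ hne w₂)) : NWRed φ w₁ :=
  fun x hx => h x (by simp [NeWord.toList, List.mem_append, hx])

theorem NWRed.of_append_right {i j k l : ι} {w₁ : NeWord G i j} {w₂ : NeWord G k l} {hne : j ≠ k}
    (h : NWRed φ (NeWord.append w₁ hne w₂)) : NWRed φ w₂ :=
  fun x hx => h x (by simp [NeWord.toList, List.mem_append, hx])

theorem NWRed.inv {i j : ι} {w : NeWord G i j} (h : NWRed φ w) : NWRed φ w.inv := by
  induction w with
  | singleton x h1 =>
    intro l hl
    simp only [NeWord.inv, NeWord.toList, List.mem_singleton] at hl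
    subst hl
    intro hr
    exact (h ⟨_, x⟩ (by simp [NeWord.toList])) ((inv_mem_iff (x := x)).1 hr)
  | append w₁ hne w₂ ih₁ ih₂ =>
    exact nwred_append _ (ih₂ h.of_append_right) (ih₁ h.of_append_left)

theorem head_mem_toList {i j : ι} (w : NeWord G i j) : (⟨i, w.head⟩ : Σ i, G i) ∈ w.toList := by
  induction w with
  | singleton x h1 => simp [NeWord.toList]
  | append w₁ hne w₂ ih₁ ih₂ => simp only [NeWord.toList, List.mem_append]; exact Or.inl ih₁

theorem last_mem_toList {i j : ι} (w : NeWord G i j) : (⟨j, w.last⟩ : Σ i, G i) ∈ w.toList := by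
  induction w with
  | singleton x h1 => simp [NeWord.toList]
  | append w₁ hne w₂ ih₁ ih₂ => simp only [NeWord.toList, List.mem_append]; exact Or.inr ih₂

theorem NWRed.head_not_range {i j : ι} {w : NeWord G i j} (h : NWRed φ w) :
    w.head ∉ (φ i).range := h _ (head_mem_toList w)

theorem NWRed.last_not_range {i j : ι} {w : NeWord G i j} (h : NWRed φ w) :
    w.last ∉ (φ j).range := h _ (last_mem_toList w)

theorem ne_one_of_not_range {i : ι} {x : G i} (hx : x ∉ (φ i).range) : x ≠ 1 := by
  rintro rfl; exact hx (one_mem _)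

theorem mul_not_range_of_range {i : ι} {x y : G i} (hx : x ∈ (φ i).range)
    (hy : y ∉ (φ i).range) : x * y ∉ (φ i).range := fun h =>
  hy (by simpa using mul_mem (inv_mem hx) h)

theorem nwred_replaceHead {i j : ι} {w : NeWord G i j} {x : G i} (hx : x ∉ (φ i).range)
    (h1 : x ≠ 1) (h : NWRed φ w) : NWRed φ (NeWord.replaceHead x h1 w) := by
  induction w with
  | singleton y hy => exact nwred_singleton hx h1
  | append w₁ hne w₂ ih₁ ih₂ =>
    exact nwred_append _ (ih₁ hx h1 h.of_append_left) h.of_append_right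

theorem nwred_mulHead {i j : ι} {w : NeWord G i j} {x : G i}
    (hx : x * w.head ∉ (φ i).range) (h1 : x * w.head ≠ 1) (h : NWRed φ w) :
    NWRed φ (NeWord.mulHead w x h1) :=
  nwred_replaceHead hx h1 h

theorem length_replaceHead {i j : ι} (w : NeWord G i j) (x : G i) (h1 : x ≠ 1) :
    (NeWord.replaceHead x h1 w).toList.length = w.toList.length := by
  induction w with
  | singleton y hy => rfl
  | append w₁ hne w₂ ih₁ ih₂ => simp [NeWord.replaceHead, NeWord.toList, ih₁]

theorem length_mulHead {i j : ι} (w : NeWord G i j) (x : G i) (h1 : x * w.head ≠ 1) :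
    (NeWord.mulHead w x h1).toList.length = w.toList.length :=
  length_replaceHead w _ h1

theorem length_inv {i j : ι} (w : NeWord G i j) :
    (w.inv).toList.length = w.toList.length := by
  induction w with
  | singleton y hy => rfl
  | append w₁ hne w₂ ih₁ ih₂ => simp [NeWord.inv, NeWord.toList, ih₁, ih₂, Nat.add_comm]

theorem one_le_length {i j : ι} (w : NeWord G i j) : 1 ≤ w.toList.length := by
  rcases Nat.eq_zero_or_pos w.toList.length with h | h
  · exact absurd (List.length_eq_zero_iff.1 h) w.toList_ne_nil
  · exact h

theorem two_le_length {i j : ι} (w : NeWord G i j) (hij : i ≠ j) : 2 ≤ w.toList.length := by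
  cases w with
  | singleton x h1 => exact absurd rfl hij
  | append w₁ hne w₂ =>
    simp only [NeWord.toList, List.length_append]
    have := one_le_length w₁
    have := one_le_length w₂
    omega

theorem eq_of_length_le_one {i j : ι} (w : NeWord G i j) (h : w.toList.length ≤ 1) : i = j := by
  by_contra hij
  have := two_le_length w hij
  omega

theorem prod_eq_of_last {i j : ι} (w : NeWord G i j) (h : w.toList.length ≤ 1) :
    w.prod = CoprodI.of w.last := by
  cases w with
  | singleton x h1 => simp
  | append w₁ hne w₂ =>
    exfalso
    simp only [NeWord.toList, List.length_append] at h
    have := one_le_length w₁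
    have := one_le_length w₂
    omega

theorem nwred_toWord_reduced {i j : ι} {w : NeWord G i j} (h : NWRed φ w) :
    PushoutI.Reduced φ w.toWord := h

theorem prod_not_base_range (hφ : ∀ i, Injective (φ i)) {i j : ι} {w : NeWord G i j}
    (h : NWRed φ w) : PushoutI.ofCoprodI (φ := φ) w.prod ∉ (PushoutI.base φ).range := by
  intro hr
  have := (nwred_toWord_reduced h).eq_empty_of_mem_range hφ hr
  have h2 : w.toList = [] := congrArg Word.toList this
  exact w.toList_ne_nil h2

section Length

variable (d : PushoutI.NormalWord.Transversal φ) [DecidableEq ι] [∀ i, DecidableEq (G i)]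

theorem equiv_ofCoprodI_length {i j : ι} {w : NeWord G i j} (h : NWRed φ w) :
    ((PushoutI.NormalWord.equiv (d := d)) (PushoutI.ofCoprodI (φ := φ) w.prod)).toList.length
      = w.toList.length := by
  obtain ⟨w', hw'prod, hw'map⟩ :=
    (nwred_toWord_reduced h).exists_normalWord_prod_eq d
  have h1 : (PushoutI.NormalWord.equiv (d := d)) w'.prod = w' := by
    have h0 : (PushoutI.NormalWord.equiv (d := d)) w'.prod
        = w'.prod • PushoutI.NormalWord.empty := rfl
    rw [h0, PushoutI.NormalWord.prod_smul_empty]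
  rw [show w.prod = w.toWord.prod from rfl, ← hw'prod, h1]
  have := congrArg List.length hw'map
  simp at this; exact this

theorem equiv_of_length_le_one (k : ι) (x : G k) :
    ((PushoutI.NormalWord.equiv (d := d)) (PushoutI.of (φ := φ) k x)).toList.length ≤ 1 := by
  by_cases hx : x ∈ (φ k).range
  · obtain ⟨c, rfl⟩ := hx
    rw [PushoutI.of_apply_eq_base φ k c]
    have h1 : (PushoutI.NormalWord.equiv (d := d)) (PushoutI.base φ c)
        = PushoutI.base φ c • PushoutI.NormalWord.empty := rfl
    rw [h1, PushoutI.NormalWord.base_smul_def]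
    simp [PushoutI.NormalWord.empty]
  · have h1 : (PushoutI.NormalWord.equiv (d := d)) (PushoutI.of (φ := φ) k x)
        = PushoutI.of (φ := φ) k x • PushoutI.NormalWord.empty := rfl
    rw [h1, ← PushoutI.NormalWord.cons_eq_smul (hmw := by simp [PushoutI.NormalWord.empty,
      Word.fstIdx]) (hgr := hx)]
    simp [PushoutI.NormalWord.cons, Word.cons, PushoutI.NormalWord.empty]

end Length

/-- A reduced word of length at least 2 is not equal to any element of a factor. -/
theorem prod_ne_of_of_two_le (hφ : ∀ i, Injective (φ i)) {i j : ι} {w : NeWord G i j}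
    (h : NWRed φ w) (hlen : 2 ≤ w.toList.length) (k : ι) (x : G k) :
    PushoutI.ofCoprodI (φ := φ) w.prod ≠ PushoutI.of (φ := φ) k x := by
  classical
  obtain ⟨d⟩ := PushoutI.NormalWord.transversal_nonempty φ hφ
  intro heq
  have h1 := equiv_ofCoprodI_length d h
  rw [heq] at h1
  have h2 := equiv_of_length_le_one d k x
  omega

theorem prod_ne_of (hφ : ∀ i, Injective (φ i)) {i j : ι} {w : NeWord G i j}
    (h : NWRed φ w) (hij : i ≠ j) (k : ι) (x : G k) :
    PushoutI.ofCoprodI (φ := φ) w.prod ≠ PushoutI.of (φ := φ) k x :=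
  prod_ne_of_of_two_le hφ h (two_le_length w hij) k x

theorem peel_last {i j : ι} (v : NeWord G i j) :
    v.toList.length = 1 ∨
    ∃ (m : ι) (_hm : m ≠ j) (v' : NeWord G i m),
      v.prod = v'.prod * CoprodI.of v.last ∧
      v.toList.length = v'.toList.length + 1 ∧
      (∀ l ∈ v'.toList, l ∈ v.toList) := by
  induction v with
  | singleton x h1 => left; simp [NeWord.toList]
  | append w₁ hne w₂ ih₁ ih₂ =>
    right
    rcases ih₂ with hlen | ⟨m, hm, v₂', hprod, hlen, hmem⟩
    · have hk := eq_of_length_le_one w₂ (le_of_eq hlen)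
      subst hk
      refine ⟨_, hne, w₁, ?_, ?_, ?_⟩
      · rw [NeWord.append_prod, NeWord.append_last, prod_eq_of_last w₂ (le_of_eq hlen)]
      · simp [NeWord.toList, hlen]
      · intro l hl; simp only [NeWord.toList, List.mem_append]; exact Or.inl hl
    · refine ⟨m, hm, NeWord.append w₁ hne v₂', ?_, ?_, ?_⟩
      · rw [NeWord.append_prod, NeWord.append_prod, NeWord.append_last, hprod, mul_assoc]
      · simp only [NeWord.toList, List.length_append, hlen]; omega
      · intro l hl
        simp only [NeWord.toList, List.mem_append] at hl ⊢
        rcases hl with hl | hl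
        · exact Or.inl hl
        · exact Or.inr (hmem l hl)

theorem NWRed.sub {i j p q : ι} {v : NeWord G i j} {v' : NeWord G p q}
    (hmem : ∀ l ∈ v'.toList, l ∈ v.toList) (h : NWRed φ v) : NWRed φ v' :=
  fun l hl => h l (hmem l hl)

theorem peel_head {i j : ι} (v : NeWord G i j) (hv : NWRed φ v) :
    v.toList.length = 1 ∨
    ∃ (q : ι) (_hq : q ≠ i) (v' : NeWord G q j),
      v.prod = CoprodI.of v.head * v'.prod ∧
      v.toList.length = v'.toList.length + 1 ∧ NWRed φ v' := by
  rcases peel_last v.inv with hlen | ⟨m, hm, u, hprod, hlen, hmem⟩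
  · left; rwa [length_inv] at hlen
  · right
    refine ⟨m, hm, u.inv, ?_, ?_, (NWRed.sub hmem hv.inv).inv⟩
    · have h1 : v.prod = (v.inv.prod)⁻¹ := by rw [NeWord.inv_prod, inv_inv]
      rw [h1, hprod, mul_inv_rev, NeWord.inv_prod, NeWord.inv_last, map_inv, inv_inv]
    · rw [← length_inv v, hlen, length_inv]

theorem exists_decomp (hφ : ∀ i, Injective (φ i)) (u : PushoutI φ) :
    (∃ h : H, u = PushoutI.base φ h) ∨
    ∃ (h : H) (p q : ι) (v : NeWord G p q), NWRed φ v ∧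
      u = PushoutI.base φ h * PushoutI.ofCoprodI (φ := φ) v.prod := by
  classical
  obtain ⟨d⟩ := PushoutI.NormalWord.transversal_nonempty φ hφ
  set nw := (PushoutI.NormalWord.equiv (d := d)) u with hnw
  have hu : nw.prod = u := by
    rw [show nw = u • PushoutI.NormalWord.empty from rfl, PushoutI.NormalWord.prod_smul,
      PushoutI.NormalWord.prod_empty, mul_one]
  have hprod : nw.prod = PushoutI.base φ nw.head * PushoutI.ofCoprodI (φ := φ) nw.toWord.prod := rfl
  have key : ∀ (i : ι) (g : G i), g ∈ d.set i → g ≠ 1 → g ∉ (φ i).range := by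
    intro i g hset hg1 hrange
    have h1 : ((d.compl i).equiv g).2 = (⟨g, hset⟩ : d.set i) := by
      apply Subtype.ext
      exact ((d.compl i).equiv_snd_eq_self_iff_mem ⟨1, map_one _⟩).2 hset
    have h2 : (((d.compl i).equiv g).2 : G i) = 1 :=
      ((d.compl i).coe_equiv_snd_eq_one_iff_mem (d.one_mem i)).2 (by simpa using hrange)
    rw [h1] at h2
    exact hg1 (by simpa using h2)
  by_cases hl : nw.toList = []
  · left
    refine ⟨nw.head, ?_⟩
    rw [← hu, hprod]
    have : nw.toWord.prod = 1 := by
      simp [Word.prod, hl]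
    rw [this, map_one, mul_one]
  · right
    have hne : nw.toWord ≠ Word.empty := by
      intro h
      exact hl (congrArg Word.toList h)
    obtain ⟨p, q, v, hv⟩ := NeWord.of_word nw.toWord hne
    have hvl : v.toList = nw.toList := congrArg Word.toList hv
    refine ⟨nw.head, p, q, v, ?_, ?_⟩
    · intro l hl'
      rw [hvl] at hl'
      exact key l.1 l.2 (nw.normalized l.1 l.2 hl') (nw.ne_one l hl')
    · rw [← hu, hprod]
      congr 1
      rw [show v.prod = v.toWord.prod from rfl, hv]

theorem inv_not_range {i : ι} {y : G i} (hy : y ∉ (φ i).range) : y⁻¹ ∉ (φ i).range :=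
  fun h => hy (by simpa using inv_mem h)

/-- Conjugating a cyclically reduced word of length ≥ 2 by a reduced word whose last
index avoids both ends of the middle word. -/
theorem conj_ne_of_of_avoid (hφ : ∀ i, Injective (φ i)) {a b c e : ι}
    (v : NeWord G a b) (w : NeWord G c e) (hv : NWRed φ v) (hw : NWRed φ w)
    (hbc : b ≠ c) (heb : e ≠ b) (hlen : 2 ≤ w.toList.length) (k : ι) (x : G k) :
    PushoutI.ofCoprodI (φ := φ) v.prod * PushoutI.ofCoprodI (φ := φ) w.prod * (PushoutI.ofCoprodI (φ := φ) v.prod)⁻¹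
      ≠ PushoutI.of (φ := φ) k x := by
  set full := NeWord.append (NeWord.append v hbc w) heb v.inv with hfull
  have hfullred : NWRed φ full := nwred_append _ (nwred_append _ hv hw) hv.inv
  have hfulllen : 2 ≤ full.toList.length := by
    simp only [hfull, NeWord.toList, List.length_append]
    omega
  have hkey : PushoutI.ofCoprodI (φ := φ) full.prod =
      PushoutI.ofCoprodI (φ := φ) v.prod * PushoutI.ofCoprodI (φ := φ) w.prod *
        (PushoutI.ofCoprodI (φ := φ) v.prod)⁻¹ := by
    rw [hfull, NeWord.append_prod, NeWord.append_prod, NeWord.inv_prod, map_mul, map_mul,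
      map_inv]
  rw [← hkey]
  exact prod_ne_of_of_two_le hφ hfullred hfulllen k x

theorem conjA_step (hφ : ∀ i, Injective (φ i)) (n : ℕ)
    (IH : ∀ {a b : ι} (v : NeWord G a b), NWRed φ v → v.toList.length ≤ n →
      ∀ {i j : ι} (w : NeWord G i j), NWRed φ w → i ≠ j → ∀ (k : ι) (x : G k),
        PushoutI.ofCoprodI (φ := φ) v.prod * PushoutI.ofCoprodI (φ := φ) w.prod *
          (PushoutI.ofCoprodI (φ := φ) v.prod)⁻¹ ≠ PushoutI.of (φ := φ) k x)
    {a i j : ι} (v : NeWord G a i) (hv : NWRed φ v) (hlen : v.toList.length ≤ n + 1)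
    (w : NeWord G i j) (hw : NWRed φ w) (hij : i ≠ j) (k : ι) (x : G k) :
    PushoutI.ofCoprodI (φ := φ) v.prod * PushoutI.ofCoprodI (φ := φ) w.prod * (PushoutI.ofCoprodI (φ := φ) v.prod)⁻¹
      ≠ PushoutI.of (φ := φ) k x := by
  set y := v.last with hy_def
  have hy : y ∉ (φ i).range := hv.last_not_range
  have hy1 : y ≠ 1 := ne_one_of_not_range hy
  have hyinv : y⁻¹ ∉ (φ i).range := inv_not_range hy
  have hyinv1 : y⁻¹ ≠ 1 := ne_one_of_not_range hyinv
  by_cases hY : y * w.head ∈ (φ i).range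
  · -- the conjugating letter merges with the head of `w` into the base group
    rcases peel_head w hw with hw1 | ⟨q, hq, w₂, hwprod, hwlen, hw₂red⟩
    · exact absurd (eq_of_length_le_one w (le_of_eq hw1)) hij
    obtain ⟨c, hc⟩ := hY
    have hz : φ q c * w₂.head ∉ (φ q).range :=
      mul_not_range_of_range ⟨c, rfl⟩ hw₂red.head_not_range
    have hz1 : φ q c * w₂.head ≠ 1 := ne_one_of_not_range hz
    set m1 := NeWord.mulHead w₂ (φ q c) hz1 with hm1
    have hm1red : NWRed φ m1 := nwred_mulHead hz hz1 hw₂red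
    set wt := NeWord.append m1 (Ne.symm hij) (NeWord.singleton y⁻¹ hyinv1) with hwt
    have hwtred : NWRed φ wt := nwred_append _ hm1red (nwred_singleton hyinv hyinv1)
    have hkey : PushoutI.ofCoprodI (φ := φ) wt.prod =
        PushoutI.of (φ := φ) i y * PushoutI.ofCoprodI (φ := φ) w.prod * PushoutI.of (φ := φ) i y⁻¹ := by
      rw [hwt, NeWord.append_prod, hm1, NeWord.mulHead_prod, NeWord.prod_singleton,
        map_mul, map_mul, PushoutI.ofCoprodI_of, PushoutI.ofCoprodI_of,
        PushoutI.of_apply_eq_base φ q c, hwprod, map_mul, PushoutI.ofCoprodI_of,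
        ← PushoutI.of_apply_eq_base φ i c, hc, map_mul]
      simp [mul_assoc]
    rcases peel_last v with hv1 | ⟨m, hm, v', hvprod, hvlen, hvmem⟩
    · intro heq
      apply prod_ne_of hφ hwtred hq k x
      rw [hkey]
      have hV : PushoutI.ofCoprodI (φ := φ) v.prod = PushoutI.of (φ := φ) i y := by
        rw [prod_eq_of_last v (le_of_eq hv1), PushoutI.ofCoprodI_of]
      rw [hV] at heq
      rw [← heq, map_inv]
    · have hv'red := NWRed.sub hvmem hv
      intro heq
      apply IH v' hv'red (by omega) wt hwtred hq k x
      rw [hkey]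
      have hV : PushoutI.ofCoprodI (φ := φ) v.prod
          = PushoutI.ofCoprodI (φ := φ) v'.prod * PushoutI.of (φ := φ) i y := by
        rw [hvprod, map_mul, PushoutI.ofCoprodI_of]
      rw [hV] at heq
      rw [← heq, map_inv]
      group
  · -- no merging into the base group: the conjugated word stays reduced
    have hz1 : y * w.head ≠ 1 := ne_one_of_not_range hY
    set m1 := NeWord.mulHead w y hz1 with hm1
    have hm1red : NWRed φ m1 := nwred_mulHead hY hz1 hw
    set wt := NeWord.append m1 (Ne.symm hij) (NeWord.singleton y⁻¹ hyinv1) with hwt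
    have hwtred : NWRed φ wt := nwred_append _ hm1red (nwred_singleton hyinv hyinv1)
    have hwtlen : 2 ≤ wt.toList.length := by
      have h1 := one_le_length m1
      simp only [hwt, NeWord.toList, List.length_append, List.length_singleton]
      omega
    have hkey : PushoutI.ofCoprodI (φ := φ) wt.prod =
        PushoutI.of (φ := φ) i y * PushoutI.ofCoprodI (φ := φ) w.prod * PushoutI.of (φ := φ) i y⁻¹ := by
      rw [hwt, NeWord.append_prod, hm1, NeWord.mulHead_prod, NeWord.prod_singleton,
        map_mul, map_mul, PushoutI.ofCoprodI_of, PushoutI.ofCoprodI_of]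
    rcases peel_last v with hv1 | ⟨m, hm, v', hvprod, hvlen, hvmem⟩
    · intro heq
      apply prod_ne_of_of_two_le hφ hwtred hwtlen k x
      rw [hkey]
      have hV : PushoutI.ofCoprodI (φ := φ) v.prod = PushoutI.of (φ := φ) i y := by
        rw [prod_eq_of_last v (le_of_eq hv1), PushoutI.ofCoprodI_of]
      rw [hV] at heq
      rw [← heq, map_inv]
    · have hv'red := NWRed.sub hvmem hv
      intro heq
      apply conj_ne_of_of_avoid hφ v' wt hv'red hwtred hm (Ne.symm hm) hwtlen k x
      rw [hkey]
      have hV : PushoutI.ofCoprodI (φ := φ) v.prod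
          = PushoutI.ofCoprodI (φ := φ) v'.prod * PushoutI.of (φ := φ) i y := by
        rw [hvprod, map_mul, PushoutI.ofCoprodI_of]
      rw [hV] at heq
      rw [← heq, map_inv]
      group

theorem conjA (hφ : ∀ i, Injective (φ i)) : ∀ (n : ℕ), ∀ {a b : ι} (v : NeWord G a b),
    NWRed φ v → v.toList.length ≤ n → ∀ {i j : ι} (w : NeWord G i j),
    NWRed φ w → i ≠ j → ∀ (k : ι) (x : G k),
    PushoutI.ofCoprodI (φ := φ) v.prod * PushoutI.ofCoprodI (φ := φ) w.prod *
      (PushoutI.ofCoprodI (φ := φ) v.prod)⁻¹ ≠ PushoutI.of (φ := φ) k x := by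
  intro n
  induction n with
  | zero =>
    intro a b v hv hn
    have := one_le_length v
    omega
  | succ n ihn =>
    intro a b v hv hn i j w hw hij k x
    by_cases hbi : b = i
    · subst hbi
      exact conjA_step hφ n ihn v hv hn w hw hij k x
    by_cases hbj : b = j
    · subst hbj
      intro heq
      refine conjA_step hφ n ihn v hv hn w.inv hw.inv (Ne.symm hij) k x⁻¹ ?_
      rw [NeWord.inv_prod, map_inv, map_inv, ← heq]
      group
    · exact conj_ne_of_of_avoid hφ v w hv hw hbi (fun h => hbj h.symm)
        (two_le_length w hij) k x

/-- The key theorem: a cyclically reduced word of length at least two is not conjugate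
to any element of a factor of the amalgam. -/
theorem not_isConj_of (hφ : ∀ i, Injective (φ i)) {i j : ι} (w : NeWord G i j)
    (hw : NWRed φ w) (hij : i ≠ j) (k : ι) (x : G k) :
    ¬ IsConj (PushoutI.of (φ := φ) k x) (PushoutI.ofCoprodI (φ := φ) w.prod) := by
  intro hconj
  obtain ⟨u, hu⟩ := isConj_iff.1 hconj
  have key : u⁻¹ * PushoutI.ofCoprodI (φ := φ) w.prod * u = PushoutI.of (φ := φ) k x := by
    rw [← hu]
    group
  rcases exists_decomp hφ u⁻¹ with ⟨h, hdec⟩ | ⟨h, p, q, v, hvred, hdec⟩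
  · apply prod_ne_of hφ hw hij k (φ k h⁻¹ * x * φ k h)
    have hu2 : u = ((PushoutI.base φ h : PushoutI φ))⁻¹ := by rw [← hdec, inv_inv]
    have h2 : PushoutI.ofCoprodI (φ := φ) w.prod
        = PushoutI.base φ h⁻¹ * PushoutI.of (φ := φ) k x * PushoutI.base φ h := by
      rw [← key, hdec, hu2, map_inv]
      group
    rw [h2, ← PushoutI.of_apply_eq_base φ k h, ← PushoutI.of_apply_eq_base φ k h⁻¹,
      ← map_mul, ← map_mul]
  · apply conjA hφ v.toList.length v hvred le_rfl w hw hij k (φ k h⁻¹ * x * φ k h)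
    have hu2 : u = (PushoutI.base φ h * PushoutI.ofCoprodI (φ := φ) v.prod)⁻¹ := by
      rw [← hdec, inv_inv]
    have h2 : PushoutI.ofCoprodI (φ := φ) v.prod * PushoutI.ofCoprodI (φ := φ) w.prod *
        (PushoutI.ofCoprodI (φ := φ) v.prod)⁻¹
        = PushoutI.base φ h⁻¹ * PushoutI.of (φ := φ) k x * PushoutI.base φ h := by
      rw [← key, hdec, hu2, map_inv]
      group
    rw [h2, ← PushoutI.of_apply_eq_base φ k h, ← PushoutI.of_apply_eq_base φ k h⁻¹,
      ← map_mul, ← map_mul]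

theorem prod_eq_of_head {i j : ι} (w : NeWord G i j) (h : w.toList.length ≤ 1) :
    w.prod = CoprodI.of w.head := by
  cases w with
  | singleton x h1 => simp
  | append w₁ hne w₂ =>
    exfalso
    simp only [NeWord.toList, List.length_append] at h
    have := one_le_length w₁
    have := one_le_length w₂
    omega

theorem lemD0 (hφ : ∀ i, Injective (φ i)) {i₀ j₀ : ι} (hij : i₀ ≠ j₀) (a : G i₀) (b : G j₀)
    (hA : a ∉ (φ i₀).range) (hB : b ∉ (φ j₀).range) (k : ι) (x : G k) :
    ¬ IsConj (PushoutI.of (φ := φ) k x)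
      (PushoutI.of (φ := φ) i₀ a * PushoutI.of (φ := φ) j₀ b) := by
  have ha1 := ne_one_of_not_range hA
  have hb1 := ne_one_of_not_range hB
  set full := NeWord.append (NeWord.singleton a ha1) hij (NeWord.singleton b hb1) with hfull
  have hred : NWRed φ full := nwred_append _ (nwred_singleton hA ha1) (nwred_singleton hB hb1)
  have hkey : PushoutI.ofCoprodI (φ := φ) full.prod
      = PushoutI.of (φ := φ) i₀ a * PushoutI.of (φ := φ) j₀ b := by
    rw [hfull, NeWord.append_prod, NeWord.prod_singleton, NeWord.prod_singleton, map_mul,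
      PushoutI.ofCoprodI_of, PushoutI.ofCoprodI_of]
  rw [← hkey]
  exact not_isConj_of hφ full hred hij k x

theorem lemD (hφ : ∀ i, Injective (φ i)) : ∀ (n : ℕ), ∀ {i₀ j₀ : ι}, i₀ ≠ j₀ →
    ∀ (a : G i₀) (b : G j₀),
    (∀ z : G i₀, z * a * z⁻¹ ∉ (φ i₀).range) →
    (∀ z : G j₀, z * b * z⁻¹ ∉ (φ j₀).range) →
    ∀ {p q : ι} (v : NeWord G p q), NWRed φ v → v.toList.length ≤ n →
    ∀ (k : ι) (x : G k),
    ¬ IsConj (PushoutI.of (φ := φ) k x)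
      (PushoutI.of (φ := φ) i₀ a * PushoutI.ofCoprodI (φ := φ) v.prod *
        PushoutI.of (φ := φ) j₀ b * (PushoutI.ofCoprodI (φ := φ) v.prod)⁻¹) := by
  intro n
  induction n with
  | zero =>
    intro i₀ j₀ hij a b hA hB p q v hv hn
    have := one_le_length v
    omega
  | succ n ihn =>
    intro i₀ j₀ hij a b hA hB p q v hv hn k x
    have hA1 : a ∉ (φ i₀).range := by simpa using hA 1
    have hB1 : b ∉ (φ j₀).range := by simpa using hB 1
    by_cases hpi : p = i₀
    · subst hpi
      -- conjugate the first letter of `v` into `a`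
      set y := v.head with hy_def
      have hyr : y ∉ (φ p).range := hv.head_not_range
      have hA'' : ∀ z : G p, z * (y⁻¹ * a * y) * z⁻¹ ∉ (φ p).range := by
        intro z
        have := hA (z * y⁻¹)
        simpa [mul_assoc] using this
      rcases peel_head v hv with hv1 | ⟨q', hq', v₂, hvprod, hvlen, hv₂red⟩
      · intro hc
        have hV : PushoutI.ofCoprodI (φ := φ) v.prod = PushoutI.of (φ := φ) p y := by
          rw [prod_eq_of_head v (le_of_eq hv1), PushoutI.ofCoprodI_of]
        have hconj2 : IsConj
            (PushoutI.of (φ := φ) p a * PushoutI.ofCoprodI (φ := φ) v.prod *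
              PushoutI.of (φ := φ) j₀ b * (PushoutI.ofCoprodI (φ := φ) v.prod)⁻¹)
            (PushoutI.of (φ := φ) p (y⁻¹ * a * y) * PushoutI.of (φ := φ) j₀ b) := by
          apply isConj_iff.2
          refine ⟨(PushoutI.of (φ := φ) p y)⁻¹, ?_⟩
          simp only [hV, map_mul, map_inv]
          group
        exact lemD0 hφ hij (y⁻¹ * a * y) b (by simpa using hA'' 1) hB1 k x (hc.trans hconj2)
      · intro hc
        have hV : PushoutI.ofCoprodI (φ := φ) v.prod
            = PushoutI.of (φ := φ) p y * PushoutI.ofCoprodI (φ := φ) v₂.prod := by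
          rw [hvprod, map_mul, PushoutI.ofCoprodI_of]
        have hconj2 : IsConj
            (PushoutI.of (φ := φ) p a * PushoutI.ofCoprodI (φ := φ) v.prod *
              PushoutI.of (φ := φ) j₀ b * (PushoutI.ofCoprodI (φ := φ) v.prod)⁻¹)
            (PushoutI.of (φ := φ) p (y⁻¹ * a * y) * PushoutI.ofCoprodI (φ := φ) v₂.prod *
              PushoutI.of (φ := φ) j₀ b * (PushoutI.ofCoprodI (φ := φ) v₂.prod)⁻¹) := by
          apply isConj_iff.2
          refine ⟨(PushoutI.of (φ := φ) p y)⁻¹, ?_⟩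
          simp only [hV, map_mul, map_inv]
          group
        exact ihn hij (y⁻¹ * a * y) b hA'' hB v₂ hv₂red (by omega) k x (hc.trans hconj2)
    · by_cases hqj : q = j₀
      · subst hqj
        -- merge the last letter of `v` into `b`
        set y := v.last with hy_def
        have hyr : y ∉ (φ q).range := hv.last_not_range
        have hB'' : ∀ z : G q, z * (y * b * y⁻¹) * z⁻¹ ∉ (φ q).range := by
          intro z
          have := hB (z * y)
          simpa [mul_assoc] using this
        rcases peel_last v with hv1 | ⟨m, hm, v', hvprod, hvlen, hvmem⟩
        · intro hc
          have hV : PushoutI.ofCoprodI (φ := φ) v.prod = PushoutI.of (φ := φ) q y := by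
            rw [prod_eq_of_last v (le_of_eq hv1), PushoutI.ofCoprodI_of]
          have heq : PushoutI.of (φ := φ) i₀ a * PushoutI.ofCoprodI (φ := φ) v.prod *
              PushoutI.of (φ := φ) q b * (PushoutI.ofCoprodI (φ := φ) v.prod)⁻¹
              = PushoutI.of (φ := φ) i₀ a * PushoutI.of (φ := φ) q (y * b * y⁻¹) := by
            simp only [hV, map_mul, map_inv]
            group
          rw [heq] at hc
          exact lemD0 hφ hij a (y * b * y⁻¹) hA1 (by simpa using hB'' 1) k x hc
        · intro hc
          have hv'red := NWRed.sub hvmem hv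
          have hV : PushoutI.ofCoprodI (φ := φ) v.prod
              = PushoutI.ofCoprodI (φ := φ) v'.prod * PushoutI.of (φ := φ) q y := by
            rw [hvprod, map_mul, PushoutI.ofCoprodI_of]
          have heq : PushoutI.of (φ := φ) i₀ a * PushoutI.ofCoprodI (φ := φ) v.prod *
              PushoutI.of (φ := φ) q b * (PushoutI.ofCoprodI (φ := φ) v.prod)⁻¹
              = PushoutI.of (φ := φ) i₀ a * PushoutI.ofCoprodI (φ := φ) v'.prod *
                PushoutI.of (φ := φ) q (y * b * y⁻¹) *
                (PushoutI.ofCoprodI (φ := φ) v'.prod)⁻¹ := by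
            simp only [hV, map_mul, map_inv]
            group
          rw [heq] at hc
          exact ihn hij a (y * b * y⁻¹) hA hB'' v' hv'red (by omega) k x hc
      · -- no interaction: the whole expression is a cyclically reduced word
        intro hc
        have ha1 := ne_one_of_not_range hA1
        have hb1 := ne_one_of_not_range hB1
        have hpi' : i₀ ≠ p := fun h => hpi h.symm
        have hqj' : q ≠ j₀ := hqj
        have hjq : j₀ ≠ q := fun h => hqj h.symm
        set full := NeWord.append
          (NeWord.append (NeWord.append (NeWord.singleton a ha1) hpi' v) hqj'
            (NeWord.singleton b hb1)) hjq v.inv with hfull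
        have hred : NWRed φ full :=
          nwred_append _ (nwred_append _ (nwred_append _ (nwred_singleton hA1 ha1) hv)
            (nwred_singleton hB1 hb1)) hv.inv
        have hkey : PushoutI.ofCoprodI (φ := φ) full.prod
            = PushoutI.of (φ := φ) i₀ a * PushoutI.ofCoprodI (φ := φ) v.prod *
              PushoutI.of (φ := φ) j₀ b * (PushoutI.ofCoprodI (φ := φ) v.prod)⁻¹ := by
          rw [hfull]
          simp only [NeWord.append_prod, NeWord.prod_singleton, NeWord.inv_prod, map_mul,
            map_inv, PushoutI.ofCoprodI_of]
        rw [← hkey] at hc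
        exact not_isConj_of hφ full hred hpi' k x hc

/-- Main general lemma: `a * u * b * u⁻¹` is never conjugate to an element of a factor,
when `a`, `b` are non-peripheral elements of two distinct factors. -/
theorem lemE (hφ : ∀ i, Injective (φ i)) {i₀ j₀ : ι} (hij : i₀ ≠ j₀) (a : G i₀) (b : G j₀)
    (hA : ∀ z : G i₀, z * a * z⁻¹ ∉ (φ i₀).range)
    (hB : ∀ z : G j₀, z * b * z⁻¹ ∉ (φ j₀).range)
    (u : PushoutI φ) (k : ι) (x : G k) :
    ¬ IsConj (PushoutI.of (φ := φ) k x)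
      (PushoutI.of (φ := φ) i₀ a * u * PushoutI.of (φ := φ) j₀ b * u⁻¹) := by
  have hbase : ∀ h : H, PushoutI.of (φ := φ) i₀ a * PushoutI.base φ h
      = PushoutI.base φ h * PushoutI.of (φ := φ) i₀ ((φ i₀ h)⁻¹ * a * φ i₀ h) := by
    intro h
    rw [← PushoutI.of_apply_eq_base φ i₀ h, ← map_mul, ← map_mul]
    congr 1
    group
  rcases exists_decomp hφ u with ⟨h, hdec⟩ | ⟨h, p, q, v, hvred, hdec⟩
  · intro hc
    have hA' : ∀ z : G i₀, z * ((φ i₀ h)⁻¹ * a * φ i₀ h) * z⁻¹ ∉ (φ i₀).range := by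
      intro z
      have := hA (z * (φ i₀ h)⁻¹)
      simpa [mul_assoc] using this
    have hconj2 : IsConj
        (PushoutI.of (φ := φ) i₀ a * u * PushoutI.of (φ := φ) j₀ b * u⁻¹)
        (PushoutI.of (φ := φ) i₀ ((φ i₀ h)⁻¹ * a * φ i₀ h) * PushoutI.of (φ := φ) j₀ b) := by
      apply isConj_iff.2
      refine ⟨(PushoutI.base φ h)⁻¹, ?_⟩
      rw [hdec]
      rw [show PushoutI.of (φ := φ) i₀ a * PushoutI.base φ h * PushoutI.of (φ := φ) j₀ b *
          (PushoutI.base φ h)⁻¹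
          = PushoutI.of (φ := φ) i₀ a * PushoutI.base φ h * PushoutI.of (φ := φ) j₀ b *
            (PushoutI.base φ h)⁻¹ from rfl]
      rw [show (PushoutI.of (φ := φ) i₀ a * PushoutI.base φ h) = PushoutI.base φ h *
        PushoutI.of (φ := φ) i₀ ((φ i₀ h)⁻¹ * a * φ i₀ h) from hbase h]
      group
    exact lemD0 hφ hij _ b (by simpa using hA' 1) (by simpa using hB 1) k x (hc.trans hconj2)
  · intro hc
    have hA' : ∀ z : G i₀, z * ((φ i₀ h)⁻¹ * a * φ i₀ h) * z⁻¹ ∉ (φ i₀).range := by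
      intro z
      have := hA (z * (φ i₀ h)⁻¹)
      simpa [mul_assoc] using this
    have hconj2 : IsConj
        (PushoutI.of (φ := φ) i₀ a * u * PushoutI.of (φ := φ) j₀ b * u⁻¹)
        (PushoutI.of (φ := φ) i₀ ((φ i₀ h)⁻¹ * a * φ i₀ h) *
          PushoutI.ofCoprodI (φ := φ) v.prod * PushoutI.of (φ := φ) j₀ b *
          (PushoutI.ofCoprodI (φ := φ) v.prod)⁻¹) := by
      apply isConj_iff.2
      refine ⟨(PushoutI.base φ h)⁻¹, ?_⟩
      rw [hdec, show PushoutI.of (φ := φ) i₀ a *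
          (PushoutI.base φ h * PushoutI.ofCoprodI (φ := φ) v.prod)
          = PushoutI.base φ h * PushoutI.of (φ := φ) i₀ ((φ i₀ h)⁻¹ * a * φ i₀ h) *
            PushoutI.ofCoprodI (φ := φ) v.prod by rw [← mul_assoc, hbase h]]
      group
    exact lemD hφ v.toList.length hij _ b hA' hB v hvred le_rfl k x (hc.trans hconj2)

end AmalgAux

open Monoid

/-- An element of the amalgamated free product is *peripheral* if it is conjugate
to an element of the amalgamating subgroup `C` (i.e. of the image of `base φ`). -/
def Peripheral {C : Type*} [Group C] {G : Bool → Type*} [∀ i, Group (G i)]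
    (φ : ∀ i, C →* G i) (x : PushoutI φ) : Prop :=
  ∃ c : C, IsConj (PushoutI.base φ c) x

theorem stmt0 {C : Type*} [Group C] {G : Bool → Type*} [∀ i, Group (G i)]
    (φ : ∀ i, C →* G i) (hφ : ∀ i, Function.Injective (φ i))
    (a : G true) (ha : ¬ Peripheral φ (PushoutI.of (φ := φ) true a))
    (g : PushoutI φ) (b : G false)
    (hb : ¬ Peripheral φ (PushoutI.of (φ := φ) false b))
    (hg : IsConj (PushoutI.of (φ := φ) false b) g) :
    (¬ ∃ x : G true, IsConj (PushoutI.of (φ := φ) true x)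
        (PushoutI.of (φ := φ) true a * g)) ∧
    (¬ ∃ y : G false, IsConj (PushoutI.of (φ := φ) false y)
        (PushoutI.of (φ := φ) true a * g)) := by
  have main : ∀ (k : Bool) (x : G k), ¬ IsConj (PushoutI.of (φ := φ) k x)
      (PushoutI.of (φ := φ) true a * g) := by
    intro k x hc
    obtain ⟨c, hcb⟩ := isConj_iff.1 hg
    have hA : ∀ z : G true, z * a * z⁻¹ ∉ (φ true).range := by
      rintro z ⟨c0, hc0⟩
      apply ha
      refine ⟨c0, ?_⟩
      have h1 : PushoutI.of (φ := φ) true (z * a * z⁻¹) = PushoutI.base φ c0 := by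
        rw [← hc0, PushoutI.of_apply_eq_base]
      have h2 : IsConj (PushoutI.of (φ := φ) true a)
          (PushoutI.of (φ := φ) true (z * a * z⁻¹)) :=
        isConj_iff.2 ⟨PushoutI.of (φ := φ) true z, by
          rw [← map_inv, ← map_mul, ← map_mul]⟩
      rw [h1] at h2
      exact h2.symm
    have hB : ∀ z : G false, z * b * z⁻¹ ∉ (φ false).range := by
      rintro z ⟨c0, hc0⟩
      apply hb
      refine ⟨c0, ?_⟩
      have h1 : PushoutI.of (φ := φ) false (z * b * z⁻¹) = PushoutI.base φ c0 := by
        rw [← hc0, PushoutI.of_apply_eq_base]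
      have h2 : IsConj (PushoutI.of (φ := φ) false b)
          (PushoutI.of (φ := φ) false (z * b * z⁻¹)) :=
        isConj_iff.2 ⟨PushoutI.of (φ := φ) false z, by
          rw [← map_inv, ← map_mul, ← map_mul]⟩
      rw [h1] at h2
      exact h2.symm
    have hrw : PushoutI.of (φ := φ) true a * g
        = PushoutI.of (φ := φ) true a * c * PushoutI.of (φ := φ) false b * c⁻¹ := by
      rw [← hcb]
      group
    rw [hrw] at hc
    exact AmalgAux.lemE hφ (by simp) a b hA hB c k x hc
  exact ⟨fun ⟨x, hx⟩ => main true x hx, fun ⟨y, hy⟩ => main false y hy⟩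
end

section
/- Let G = A *_C B be an amalgamated free product. Suppose a ∈ A is not conjugate in G to any element of C, and g ∈ G is conjugate in G to a non-peripheral element a' ∈ A. If a·g is conjugate in G to an element lying in A or in B, then g ∈ A. -/
/-!
STATEMENT 1: In `G = A *_C B`, if `a ∈ A` is not conjugate in `G` to any element
of `C`, `g ∈ G` is conjugate in `G` to a non-peripheral element `a' ∈ A`, and
`a * g` is conjugate in `G` to an element lying in `A` or in `B`, then `g ∈ A`.

We model `A *_C B` as `Monoid.PushoutI φ` over the index type `Bool`
(`A = G true`, `B = G false`), with injective structure maps `φ i : C →* G i`.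
-/

open Monoid

namespace AmalgamAux

open Monoid Monoid.PushoutI

variable {C : Type*} [Group C] {G : Bool → Type*} [∀ i, Group (G i)]
  {φ : ∀ i, C →* G i}

/-- product of a list of letters in the pushout -/
def prodL (φ : ∀ i, C →* G i) (l : List (Σ i, G i)) : PushoutI φ :=
  (l.map fun p => PushoutI.of (φ := φ) p.1 p.2).prod

/-- reduced list of letters -/
def Red (φ : ∀ i, C →* G i) (l : List (Σ i, G i)) : Prop :=
  (∀ p ∈ l, p.2 ∉ (φ p.1).range) ∧ l.IsChain (fun p q => p.1 ≠ q.1)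

@[simp] theorem prodL_nil : prodL φ [] = 1 := rfl

@[simp] theorem prodL_cons (p : Σ i, G i) (l : List (Σ i, G i)) :
    prodL φ (p :: l) = PushoutI.of (φ := φ) p.1 p.2 * prodL φ l := by
  simp [prodL]

@[simp] theorem prodL_append (l l' : List (Σ i, G i)) :
    prodL φ (l ++ l') = prodL φ l * prodL φ l' := by
  simp [prodL]

/-- reversed inverse of a list of letters -/
def revinv (l : List (Σ i, G i)) : List (Σ i, G i) :=
  (l.map fun p => ⟨p.1, p.2⁻¹⟩).reverse

@[simp] theorem prodL_revinv (l : List (Σ i, G i)) :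
    prodL φ (revinv l) = (prodL φ l)⁻¹ := by
  induction l with
  | nil => simp [revinv]
  | cons p l ih =>
    simp only [revinv, List.map_cons, List.reverse_cons] at *
    rw [prodL_append, ih]
    simp [mul_comm]

theorem mem_revinv {p : Σ i, G i} {l : List (Σ i, G i)} :
    p ∈ revinv l ↔ ∃ q ∈ l, p = ⟨q.1, q.2⁻¹⟩ := by
  simp only [revinv, List.mem_reverse, List.mem_map]
  constructor
  · rintro ⟨q, hq, rfl⟩; exact ⟨q, hq, rfl⟩
  · rintro ⟨q, hq, rfl⟩; exact ⟨q, hq, rfl⟩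

theorem red_revinv {l : List (Σ i, G i)} (h : Red φ l) : Red φ (revinv l) := by
  refine ⟨?_, ?_⟩
  · intro p hp
    rcases mem_revinv.1 hp with ⟨q, hq, rfl⟩
    intro hr
    exact h.1 q hq (inv_mem_iff.mp hr)
  · rw [revinv, List.isChain_reverse, List.isChain_map]
    exact h.2.imp (fun a b hab => Ne.symm hab)

theorem head?_revinv (l : List (Σ i, G i)) :
    (revinv l).getLast? = l.head?.map fun p => ⟨p.1, p.2⁻¹⟩ := by
  rw [revinv, List.getLast?_reverse, List.head?_map]

/-- build a mathlib `Word` from a reduced list -/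
def toWord (hφ : ∀ i, Function.Injective (φ i)) {l : List (Σ i, G i)} (h : Red φ l) :
    CoprodI.Word G :=
  { toList := l
    ne_one := fun p hp => by
      intro hp1
      exact h.1 p hp ⟨1, by simp [hp1]⟩
    chain_ne := h.2 }

theorem toWord_reduced (hφ : ∀ i, Function.Injective (φ i)) {l : List (Σ i, G i)}
    (h : Red φ l) : Reduced φ (toWord hφ h) :=
  fun p hp => h.1 p hp

theorem ofCoprodI_toWord (hφ : ∀ i, Function.Injective (φ i)) {l : List (Σ i, G i)}
    (h : Red φ l) : ofCoprodI ((toWord hφ h).prod) = prodL φ l := by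
  rw [CoprodI.Word.prod, prodL, map_list_prod]
  simp [toWord, List.map_map, Function.comp_def]

/-- a reduced list whose product is in the base is empty -/
theorem red_base_eq_nil (hφ : ∀ i, Function.Injective (φ i)) {l : List (Σ i, G i)}
    (h : Red φ l) (hb : prodL φ l ∈ (PushoutI.base φ).range) : l = [] := by
  have := Reduced.eq_empty_of_mem_range hφ (toWord_reduced hφ h)
    (by rwa [ofCoprodI_toWord hφ h])
  have h2 := congrArg CoprodI.Word.toList this
  simpa [toWord, CoprodI.Word.empty] using h2

/-- uniqueness of length of reduced forms -/
theorem len_eq (hφ : ∀ i, Function.Injective (φ i)) {l l' : List (Σ i, G i)} (c : C)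
    (h : Red φ l) (h' : Red φ l')
    (heq : PushoutI.base φ c * prodL φ l = prodL φ l') : l.length = l'.length := by
  rcases NormalWord.transversal_nonempty φ hφ with ⟨d⟩
  rcases (toWord_reduced hφ h).exists_normalWord_prod_eq d with ⟨w1, hw1, hm1⟩
  rcases (toWord_reduced hφ h').exists_normalWord_prod_eq d with ⟨w2, hw2, hm2⟩
  rw [ofCoprodI_toWord hφ h] at hw1
  rw [ofCoprodI_toWord hφ h'] at hw2
  have hp : (c • w1).prod = w2.prod := by
    rw [NormalWord.prod_base_smul, hw1, hw2, heq]
  have hw : c • w1 = w2 := NormalWord.prod_injective hp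
  have hl : w1.toList = w2.toList := by
    rw [← hw]; rfl
  have := congrArg List.length hm1
  have h2 := congrArg List.length hm2
  simp only [List.length_map] at this h2
  simp [toWord] at this h2
  rw [← this, ← h2, hl]


/-- multiplying a reduced list by a base element on the left -/
theorem base_mul_red (c : C) {L : List (Σ i, G i)} (h : Red φ L) :
    ∃ (c' : C) (L' : List (Σ i, G i)), Red φ L' ∧ L'.length = L.length ∧
      PushoutI.base φ c * prodL φ L = PushoutI.base φ c' * prodL φ L' := by
  cases L with
  | nil => exact ⟨c, [], h, rfl, rfl⟩
  | cons a M =>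
    refine ⟨1, ⟨a.1, φ a.1 c * a.2⟩ :: M, ⟨?_, ?_⟩, by simp, ?_⟩
    · intro p hp
      rcases List.mem_cons.1 hp with rfl | hp
      · intro hr
        have h2 : (φ a.1 c)⁻¹ * (φ a.1 c * a.2) ∈ (φ a.1).range :=
          mul_mem (inv_mem ⟨c, rfl⟩) hr
        rw [inv_mul_cancel_left] at h2
        exact h.1 a (List.mem_cons_self) h2
      · exact h.1 p (List.mem_cons_of_mem _ hp)
    · rw [List.isChain_cons]
      exact ⟨(List.isChain_cons.1 h.2).1, (List.isChain_cons.1 h.2).2⟩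
    · rw [prodL_cons, prodL_cons, map_one, one_mul, ← mul_assoc, ← of_apply_eq_base φ a.1 c,
        ← map_mul]

/-- multiplying a reduced list by one letter on the left -/
theorem letter_mul_red (j : Bool) (y : G j) {L : List (Σ i, G i)} (h : Red φ L) :
    ∃ (c' : C) (L' : List (Σ i, G i)), Red φ L' ∧ L'.length ≤ L.length + 1 ∧
      PushoutI.of (φ := φ) j y * prodL φ L = PushoutI.base φ c' * prodL φ L' := by
  by_cases hy : y ∈ (φ j).range
  · rcases hy with ⟨c, rfl⟩
    rw [of_apply_eq_base]
    rcases base_mul_red c h with ⟨c', L', h1, h2, h3⟩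
    exact ⟨c', L', h1, by omega, h3⟩
  · cases L with
    | nil =>
      refine ⟨1, [⟨j, y⟩], ⟨?_, List.isChain_singleton _⟩, by simp, by simp⟩
      intro p hp
      rcases List.mem_cons.1 hp with rfl | hp
      · exact hy
      · simp at hp
    | cons a M =>
      obtain ⟨i, b⟩ := a
      by_cases hij : j = i
      · subst hij
        by_cases hz : y * b ∈ (φ j).range
        · rcases hz with ⟨c, hc⟩
          have hM : Red φ M := ⟨fun p hp => h.1 p (List.mem_cons_of_mem _ hp),
            (List.isChain_cons.1 h.2).2⟩
          rcases base_mul_red c hM with ⟨c', L', h1, h2, h3⟩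
          refine ⟨c', L', h1, by simp; omega, ?_⟩
          rw [prodL_cons]
          dsimp only
          rw [← mul_assoc, ← map_mul, ← hc, of_apply_eq_base, h3]
        · refine ⟨1, ⟨j, y * b⟩ :: M, ⟨?_, ?_⟩, by simp, ?_⟩
          · intro p hp
            rcases List.mem_cons.1 hp with rfl | hp
            · exact hz
            · exact h.1 p (List.mem_cons_of_mem _ hp)
          · rw [List.isChain_cons]
            exact ⟨(List.isChain_cons.1 h.2).1, (List.isChain_cons.1 h.2).2⟩
          · rw [prodL_cons, prodL_cons, map_one, one_mul]
            dsimp only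
            rw [← mul_assoc, ← map_mul]
      · refine ⟨1, ⟨j, y⟩ :: ⟨i, b⟩ :: M, ⟨?_, ?_⟩, by simp, by simp⟩
        · intro p hp
          rcases List.mem_cons.1 hp with rfl | hp
          · exact hy
          · exact h.1 p hp
        · rw [List.isChain_cons]
          exact ⟨fun q hq => by simp at hq; subst hq; exact hij, h.2⟩

/-- every list product can be normalized to base * reduced -/
theorem exists_red (l : List (Σ i, G i)) :
    ∃ (c : C) (L : List (Σ i, G i)), Red φ L ∧ L.length ≤ l.length ∧
      prodL φ l = PushoutI.base φ c * prodL φ L := by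
  induction l with
  | nil => exact ⟨1, [], ⟨by simp, by simp⟩, by simp, by simp⟩
  | cons p l ih =>
    rcases ih with ⟨c, L, h1, h2, h3⟩
    have : PushoutI.of (φ := φ) p.1 p.2 * PushoutI.base φ c
        = PushoutI.of (φ := φ) p.1 (p.2 * φ p.1 c) := by
      rw [map_mul, of_apply_eq_base]
    rcases letter_mul_red p.1 (p.2 * φ p.1 c) h1 with ⟨c', L', h1', h2', h3'⟩
    refine ⟨c', L', h1', by simp; omega, ?_⟩
    rw [prodL_cons, h3, ← mul_assoc, this, h3']

/-- every element of the pushout is a product of letters -/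
theorem exists_list (x : PushoutI φ) : ∃ l : List (Σ i, G i), x = prodL φ l := by
  induction x using PushoutI.induction_on with
  | of i g => exact ⟨[⟨i, g⟩], by simp⟩
  | base c => exact ⟨[⟨true, φ true c⟩], by simp [of_apply_eq_base]⟩
  | mul x y hx hy =>
    rcases hx with ⟨l, rfl⟩
    rcases hy with ⟨l', rfl⟩
    exact ⟨l ++ l', by simp⟩

/-- reduced words are geodesics -/
theorem red_length_le (hφ : ∀ i, Function.Injective (φ i))
    {l L : List (Σ i, G i)} (h : Red φ L) (heq : prodL φ l = prodL φ L) :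
    L.length ≤ l.length := by
  rcases exists_red (φ := φ) l with ⟨c, L', h1, h2, h3⟩
  have := len_eq hφ c h1 h (by rw [← h3, heq])
  omega


/-- n-fold concatenation -/
def powL (n : ℕ) (l : List (Σ i, G i)) : List (Σ i, G i) :=
  match n with
  | 0 => []
  | n + 1 => l ++ powL n l

theorem prodL_powL (n : ℕ) (l : List (Σ i, G i)) :
    prodL φ (powL n l) = (prodL φ l) ^ n := by
  induction n with
  | zero => simp [powL]
  | succ n ih => rw [powL, prodL_append, ih, ← pow_succ']

theorem powL_nil (n : ℕ) : powL (G := G) n [] = [] := by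
  induction n with
  | zero => rfl
  | succ n ih => rw [powL, ih]; rfl

theorem length_powL (n : ℕ) (l : List (Σ i, G i)) :
    (powL n l).length = n * l.length := by
  induction n with
  | zero => simp [powL]
  | succ n ih => simp [powL, ih]; ring

theorem red_powL {l : List (Σ i, G i)} (h : Red φ l)
    (hc : ∀ x ∈ l.getLast?, ∀ y ∈ l.head?, x.1 ≠ y.1) (n : ℕ) :
    Red φ (powL n l) ∧ ((powL n l).head? = l.head? ∨ powL n l = []) := by
  induction n with
  | zero => exact ⟨⟨by simp [powL], by simp [powL]⟩, Or.inr rfl⟩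
  | succ n ih =>
    refine ⟨⟨?_, ?_⟩, ?_⟩
    · intro p hp
      rw [powL, List.mem_append] at hp
      rcases hp with hp | hp
      · exact h.1 p hp
      · exact ih.1.1 p hp
    · rw [powL, List.isChain_append]
      refine ⟨h.2, ih.1.2, ?_⟩
      intro x hx y hy
      rcases ih.2 with heq | heq
      · rw [heq] at hy; exact hc x hx y hy
      · rw [heq] at hy; simp at hy
    · cases l with
      | nil => right; rw [powL, powL_nil]; rfl
      | cons a l' => left; rw [powL]; simp

/-- THE KEY LEMMA: a cyclically reduced word of length ≥ 2 is not conjugate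
into a factor. -/
theorem not_conj_of (hφ : ∀ i, Function.Injective (φ i))
    {l : List (Σ i, G i)} (h : Red φ l) (hlen : 2 ≤ l.length)
    (hc : ∀ x ∈ l.getLast?, ∀ y ∈ l.head?, x.1 ≠ y.1)
    (t : PushoutI φ) (i : Bool) (x : G i) :
    t * prodL φ l * t⁻¹ ≠ PushoutI.of (φ := φ) i x := by
  intro heq
  rcases exists_list t with ⟨lt, rfl⟩
  set k := lt.length + 1 with hk
  have hpow : (prodL φ lt * prodL φ l * (prodL φ lt)⁻¹) ^ k
      = PushoutI.of (φ := φ) i (x ^ k) := by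
    rw [heq, map_pow]
  rw [conj_pow] at hpow
  have h2 : prodL φ (powL k l) =
      prodL φ (revinv lt ++ (⟨i, x ^ k⟩ :: lt)) := by
    rw [prodL_powL, prodL_append, prodL_cons, prodL_revinv]
    dsimp only
    rw [← hpow]
    group
  have h3 := red_length_le hφ (red_powL h hc k).1 h2.symm
  rw [length_powL] at h3
  simp only [List.length_append, List.length_cons, revinv, List.length_reverse,
    List.length_map] at h3
  have h4 : k * 2 ≤ k * l.length := Nat.mul_le_mul_left k hlen
  omega


/-- not conjugate to a base element (non-peripheral) -/
def NP (φ : ∀ i, C →* G i) (x : G true) : Prop :=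
  ¬ ∃ c : C, IsConj (PushoutI.base φ c) (PushoutI.of (φ := φ) true x)

theorem NP.not_range {x : G true} (h : NP φ x) : x ∉ (φ true).range := by
  rintro ⟨c, rfl⟩
  exact h ⟨c, by rw [of_apply_eq_base]⟩

theorem NP.conj {x : G true} (h : NP φ x) (m : G true) : NP φ (m⁻¹ * x * m) := by
  rintro ⟨c, hc⟩
  refine h ⟨c, hc.trans ?_⟩
  have : PushoutI.of (φ := φ) true (m⁻¹ * x * m)
      = (PushoutI.of (φ := φ) true m)⁻¹ * PushoutI.of (φ := φ) true x
        * PushoutI.of (φ := φ) true m := by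
    simp [map_mul]
  rw [this, isConj_iff]
  exact ⟨PushoutI.of (φ := φ) true m, by group⟩

theorem getLast?_revinv (l : List (Σ i, G i)) :
    (revinv l).head? = l.getLast?.map fun p => ⟨p.1, p.2⁻¹⟩ := by
  rw [revinv, List.head?_reverse, List.getLast?_map]

/-- cyclic reduction: `a₅ M a₃ M⁻¹` with `M` ending in a `false` letter is not
conjugate into a factor -/
theorem cyc_red (hφ : ∀ i, Function.Injective (φ i)) (n : ℕ) :
    ∀ (M : List (Σ i, G i)), M.length = n → Red φ M → M ≠ [] →
    (∀ p ∈ M.getLast?, p.1 = false) → ∀ (a₅ a₃ : G true), NP φ a₅ → NP φ a₃ →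
    ∀ (i : Bool) (x : G i),
    ¬ IsConj (PushoutI.of (φ := φ) i x)
      (PushoutI.of (φ := φ) true a₅ * prodL φ M * PushoutI.of (φ := φ) true a₃
        * (prodL φ M)⁻¹) := by
  induction n with
  | zero =>
    intro M hlen _ hne
    intro _ _ _ _ _ _ _ h
    exact absurd (List.length_eq_zero_iff.1 hlen) hne
  | succ n ih =>
    rintro (_ | ⟨⟨mi, mg⟩, T⟩) hlen hr hne hlast a₅ a₃ h5 h3 i x hconj
    · exact hne rfl
    cases mi with
    | true =>
      -- conjugate by (of true mg)⁻¹ and recurse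
      have hT : T ≠ [] := by
        rintro rfl
        have := hlast ⟨true, mg⟩ (by simp)
        simp at this
      have hTr : Red φ T := ⟨fun p hp => hr.1 p (List.mem_cons_of_mem _ hp),
        (List.isChain_cons.1 hr.2).2⟩
      have hTlast : ∀ p ∈ T.getLast?, p.1 = false := by
        rcases List.exists_cons_of_ne_nil hT with ⟨t, T', hTT⟩
        subst hTT
        intro p hp
        exact hlast p (by rwa [List.getLast?_cons_cons])
      refine ih T (by simpa using hlen) hTr hT hTlast (mg⁻¹ * a₅ * mg) a₃
        (h5.conj mg) h3 i x (hconj.trans ?_)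
      rw [isConj_iff]
      refine ⟨(PushoutI.of (φ := φ) true mg)⁻¹, ?_⟩
      rw [prodL_cons]
      dsimp only
      simp only [map_mul, map_inv]
      group
    | false =>
      -- the word is already cyclically reduced
      set M : List (Σ i, G i) := ⟨false, mg⟩ :: T with hM
      set N : List (Σ i, G i) :=
        ([⟨true, a₅⟩] ++ M ++ [⟨true, a₃⟩]) ++ revinv M with hN
      have hprod : prodL φ N = PushoutI.of (φ := φ) true a₅ * prodL φ M
          * PushoutI.of (φ := φ) true a₃ * (prodL φ M)⁻¹ := by
        simp [hN, mul_assoc]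
      have hMlast : ∃ q, M.getLast? = some q ∧ q.1 = false := by
        have hs := List.getLast?_isSome.2 (by simp [hM] : M ≠ [])
        rcases Option.isSome_iff_exists.1 hs with ⟨q, hq⟩
        exact ⟨q, hq, hlast q (by rw [hq]; rfl)⟩
      rcases hMlast with ⟨q, hq, hqf⟩
      have hredN : Red φ N := by
        constructor
        · intro p hp
          simp only [hN, List.mem_append, List.mem_singleton, List.mem_cons,
            List.not_mem_nil, or_false] at hp
          rcases hp with ((rfl | hp) | rfl) | hp
          · exact h5.not_range
          · exact hr.1 p hp
          · exact h3.not_range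
          · rcases mem_revinv.1 hp with ⟨r, hrm, rfl⟩
            intro hmem
            exact hr.1 r hrm (inv_mem_iff.mp hmem)
        · rw [List.isChain_append, List.isChain_append, List.isChain_append]
          refine ⟨⟨⟨List.isChain_singleton _, hr.2, ?_⟩, List.isChain_singleton _, ?_⟩,
            (red_revinv hr).2, ?_⟩
          · intro u hu v hv
            simp only [List.getLast?_singleton, Option.mem_some_iff] at hu
            subst hu
            rw [hM, List.head?_cons, Option.mem_some_iff] at hv
            subst hv
            simp
          · intro u hu v hv
            rw [List.getLast?_append, hq] at hu
            simp only [Option.or_some, Option.some_or, Option.mem_some_iff] at hu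
            subst hu
            simp only [List.head?_cons, Option.mem_some_iff] at hv
            subst hv
            simp [hqf]
          · intro u hu v hv
            rw [List.getLast?_append, List.getLast?_singleton] at hu
            simp only [Option.or_some, Option.some_or, Option.mem_some_iff] at hu
            subst hu
            rw [getLast?_revinv, hq] at hv
            simp only [Option.map_some, Option.mem_some_iff] at hv
            subst hv
            simp [hqf]
      have hlenN : 2 ≤ N.length := by
        simp [hN]
        omega
      have hcN : ∀ u ∈ N.getLast?, ∀ v ∈ N.head?, u.1 ≠ v.1 := by
        intro u hu v hv
        rw [hN, List.getLast?_append] at hu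
        rw [head?_revinv, hM, List.head?_cons] at hu
        simp only [Option.map_some, Option.or_some, Option.some_or, Option.mem_some_iff] at hu
        subst hu
        simp only [hN, hM] at hv
        simp only [List.cons_append, List.head?_cons, Option.mem_some_iff] at hv
        subst hv
        simp
      rcases isConj_iff.1 hconj with ⟨u, hu⟩
      refine not_conj_of hφ hredN hlenN hcN u⁻¹ i x ?_
      rw [hprod, ← hu]
      group

/-- stripping `true`-letters from the right -/
theorem strip_right (L : List (Σ i, G i)) (hL : Red φ L) :
    ∀ (b : G true), NP φ b →
    ∃ (M : List (Σ i, G i)) (a₃ : G true), Red φ M ∧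
      (∀ p ∈ M.getLast?, p.1 = false) ∧ NP φ a₃ ∧
      prodL φ L * PushoutI.of (φ := φ) true b * (prodL φ L)⁻¹
        = prodL φ M * PushoutI.of (φ := φ) true a₃ * (prodL φ M)⁻¹ := by
  induction L using List.reverseRecOn with
  | nil =>
    intro b hb
    exact ⟨[], b, ⟨by simp, by simp⟩, by simp, hb, by simp⟩
  | append_singleton L p ih =>
    intro b hb
    have hLr : Red φ L := ⟨fun q hq => hL.1 q (by simp [hq]),
      (List.isChain_append.1 hL.2).1⟩
    obtain ⟨pi, pg⟩ := p
    cases pi with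
    | false =>
      refine ⟨L ++ [⟨false, pg⟩], b, hL, ?_, hb, rfl⟩
      intro q hq
      rw [List.getLast?_append, List.getLast?_singleton] at hq
      simp only [Option.or_some, Option.some_or, Option.mem_some_iff] at hq
      subst hq
      rfl
    | true =>
      rcases ih hLr (pg * b * pg⁻¹) (by simpa using hb.conj pg⁻¹)
        with ⟨M, a₃, h1, h2, h3, h4⟩
      refine ⟨M, a₃, h1, h2, h3, ?_⟩
      rw [← h4, prodL_append]
      simp only [prodL_cons, prodL_nil, mul_one, map_mul, map_inv]
      group

end AmalgamAux

theorem stmt1 {C : Type*} [Group C] {G : Bool → Type*} [∀ i, Group (G i)]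
    (φ : ∀ i, C →* G i) (hφ : ∀ i, Function.Injective (φ i))
    (a : G true) (ha : ¬ Peripheral φ (PushoutI.of (φ := φ) true a))
    (g : PushoutI φ) (a' : G true)
    (ha' : ¬ Peripheral φ (PushoutI.of (φ := φ) true a'))
    (hg : IsConj (PushoutI.of (φ := φ) true a') g)
    (hag : ∃ i, ∃ x : G i, IsConj (PushoutI.of (φ := φ) i x)
        (PushoutI.of (φ := φ) true a * g)) :
    g ∈ (PushoutI.of (φ := φ) true).range := by
  classical
  have hna : AmalgamAux.NP φ a := ha
  have hna' : AmalgamAux.NP φ a' := ha'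
  rcases isConj_iff.1 hg with ⟨w, hw⟩
  rcases AmalgamAux.exists_list w with ⟨lw, rfl⟩
  rcases AmalgamAux.exists_red (φ := φ) lw with ⟨c, L, hL, -, hLeq⟩
  rcases AmalgamAux.strip_right L hL a' hna' with ⟨M, a₃, h1, h2, h3, h4⟩
  have hg' : g = PushoutI.base φ c
      * (AmalgamAux.prodL φ M * PushoutI.of (φ := φ) true a₃
        * (AmalgamAux.prodL φ M)⁻¹) * (PushoutI.base φ c)⁻¹ := by
    rw [← hw, hLeq, ← h4]
    group
  by_cases hM : M = []
  · subst hM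
    simp only [AmalgamAux.prodL_nil, one_mul, inv_one, mul_one] at hg'
    rw [hg', ← PushoutI.of_apply_eq_base φ true c, ← map_inv, ← map_mul, ← map_mul]
    exact ⟨_, rfl⟩
  · exfalso
    rcases hag with ⟨i, x, hconj⟩
    set a₅ : G true := (φ true c)⁻¹ * a * (φ true c) with ha₅
    have hna₅ : AmalgamAux.NP φ a₅ := hna.conj (φ true c)
    have hZ : IsConj (PushoutI.of (φ := φ) i x)
        (PushoutI.of (φ := φ) true a₅ * AmalgamAux.prodL φ M
          * PushoutI.of (φ := φ) true a₃ * (AmalgamAux.prodL φ M)⁻¹) := by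
      refine hconj.trans (isConj_iff.2 ⟨(PushoutI.base φ c)⁻¹, ?_⟩)
      rw [hg', ha₅, ← PushoutI.of_apply_eq_base φ true c]
      simp only [map_mul, map_inv]
      group
    exact AmalgamAux.cyc_red hφ M.length M rfl h1 hM h2 a₅ a₃ hna₅ h3 i x hZ
end

section
/- In an amalgamated free product G = A *_C B, if an element g is conjugate to an element lying in one of the factors A or B, then every cyclically reduced word representing an element conjugate to g has length at most 1, i.e., lies in a factor. -/
/-!
STATEMENT 2: In an amalgamated free product `G = A *_C B`, if `g` is conjugate to
an element lying in one of the factors, then every cyclically reduced word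
representing an element conjugate to `g` has length at most `1` (lies in a factor).

We model `A *_C B` as `Monoid.PushoutI φ` over the index type `Bool`
(`A = G true`, `B = G false`), with injective structure maps `φ i : C →* G i`.
A word is a list of letters `⟨i, x⟩` with `x : G i`; it is reduced if no letter
lies in (the image of) `C` and consecutive letters lie in different factors; it
is cyclically reduced if moreover, when its length is at least `2`, its first and
last letters lie in different factors.
-/

open Monoid

/-- The element of the amalgam represented by a word. -/
def wordProd {C : Type*} [Group C] {G : Bool → Type*} [∀ i, Group (G i)]
    (φ : ∀ i, C →* G i) (l : List (Σ i, G i)) : PushoutI φ :=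
  (l.map fun p => PushoutI.of (φ := φ) p.1 p.2).prod

/-- A reduced word: letters avoid the amalgamated subgroup, adjacent letters
lie in different factors. -/
def ReducedWord {C : Type*} [Group C] {G : Bool → Type*} [∀ i, Group (G i)]
    (φ : ∀ i, C →* G i) (l : List (Σ i, G i)) : Prop :=
  (∀ p ∈ l, p.2 ∉ (φ p.1).range) ∧ l.Chain' fun p q => p.1 ≠ q.1

/-- A cyclically reduced word: reduced, and if the length is at least two then the
first and last letters lie in different factors. -/
def CyclicallyReducedWord {C : Type*} [Group C] {G : Bool → Type*} [∀ i, Group (G i)]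
    (φ : ∀ i, C →* G i) (l : List (Σ i, G i)) : Prop :=
  ReducedWord φ l ∧
    ∀ p q, l.head? = some p → l.getLast? = some q → 2 ≤ l.length → p.1 ≠ q.1

section AuxGeneral

variable {ι : Type*} {C : Type*} [Group C] {G : ι → Type*} [∀ i, Group (G i)]
  {φ : ∀ i, C →* G i} {d : PushoutI.NormalWord.Transversal φ}

theorem word_rcons_length_le {M : ι → Type*} [∀ i, Monoid (M i)] [DecidableEq ι]
    [∀ i, DecidableEq (M i)] {i : ι} (p : CoprodI.Word.Pair M i) :
    (CoprodI.Word.rcons p).toList.length ≤ p.tail.toList.length + 1 := by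
  rw [CoprodI.Word.rcons]
  split_ifs <;> simp [CoprodI.Word.cons]

theorem word_tail_length_le {M : ι → Type*} [∀ i, Monoid (M i)] [DecidableEq ι]
    [∀ i, DecidableEq (M i)] {i : ι} (p : CoprodI.Word.Pair M i) :
    p.tail.toList.length ≤ (CoprodI.Word.rcons p).toList.length := by
  rw [CoprodI.Word.rcons]
  split_ifs <;> simp [CoprodI.Word.cons]

theorem equivPair_tail_length_le {M : ι → Type*} [∀ i, Monoid (M i)] [DecidableEq ι]
    [∀ i, DecidableEq (M i)] (i : ι) (w : CoprodI.Word M) :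
    (CoprodI.Word.equivPair i w).tail.toList.length ≤ w.toList.length := by
  conv_rhs => rw [← (CoprodI.Word.equivPair i).symm_apply_apply w]
  rw [CoprodI.Word.equivPair_symm]
  exact word_tail_length_le _

theorem len_of_smul [DecidableEq ι] [∀ i, DecidableEq (G i)] (i : ι) (g : G i)
    (w : PushoutI.NormalWord d) :
    (PushoutI.of (φ := φ) i g • w).toList.length ≤ w.toList.length + 1 := by
  rw [PushoutI.NormalWord.summand_smul_def]
  have hsymm : ⇑(PushoutI.NormalWord.equivPair (d := d) i).symm = PushoutI.NormalWord.rcons i :=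
    rfl
  rw [hsymm]
  show ((PushoutI.NormalWord.rcons i _).toWord).toList.length ≤ _
  rw [PushoutI.NormalWord.rcons]
  dsimp only
  rw [CoprodI.Word.equivPair_symm]
  refine le_trans (word_rcons_length_le _) ?_
  have htail : (PushoutI.NormalWord.equivPair (d := d) i w).tail =
      (CoprodI.Word.equivPair i w.toWord).tail := by
    show (CoprodI.Word.equivPair i (CoprodI.of (φ i w.head) • w.toWord)).tail = _
    rw [CoprodI.Word.equivPair_smul_same]
  dsimp only
  rw [htail]
  exact Nat.add_le_add_right (equivPair_tail_length_le _ _) 1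

theorem len_base_smul [DecidableEq ι] [∀ i, DecidableEq (G i)] (h : C)
    (w : PushoutI.NormalWord d) :
    (PushoutI.base φ h • w).toList.length = w.toList.length := by
  rw [PushoutI.NormalWord.base_smul_def]

theorem exists_len_bound [DecidableEq ι] [∀ i, DecidableEq (G i)] (g : PushoutI φ) :
    ∃ n, ∀ w : PushoutI.NormalWord d, (g • w).toList.length ≤ w.toList.length + n := by
  induction g using PushoutI.induction_on with
  | of i g => exact ⟨1, fun w => len_of_smul i g w⟩
  | base h => exact ⟨0, fun w => le_of_eq (len_base_smul h w)⟩
  | mul a b iha ihb =>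
    obtain ⟨m, hm⟩ := iha
    obtain ⟨n, hn⟩ := ihb
    exact ⟨n + m, fun w => by
      rw [mul_smul, ← add_assoc]
      exact le_trans (hm _) (Nat.add_le_add_right (hn w) m)⟩

end AuxGeneral

section AuxBool

variable {C : Type*} [Group C] {G : Bool → Type*} [∀ i, Group (G i)]
  {φ : ∀ i, C →* G i} {d : PushoutI.NormalWord.Transversal φ}

theorem wordProd_append (l₁ l₂ : List (Σ i, G i)) :
    wordProd φ (l₁ ++ l₂) = wordProd φ l₁ * wordProd φ l₂ := by
  simp [wordProd]

theorem wordProd_flatten_replicate (n : ℕ) (l : List (Σ i, G i)) :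
    wordProd φ (List.replicate n l).flatten = (wordProd φ l) ^ n := by
  induction n with
  | zero => simp [wordProd]
  | succ k ih => rw [List.replicate_succ, List.flatten_cons, wordProd_append, ih, pow_succ']

theorem len_wordProd [∀ i, DecidableEq (G i)] (L : List (Σ i, G i)) (hL : ReducedWord φ L) :
    ((wordProd φ L) • (default : PushoutI.NormalWord d)).toList.length = L.length := by
  have hne : ∀ p ∈ L, p.2 ≠ (1 : G p.1) := by
    intro p hp h1
    exact hL.1 p hp ⟨1, by simp [h1]⟩
  let W : CoprodI.Word G := ⟨L, fun l hl => hne l hl, hL.2⟩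
  have hred : PushoutI.Reduced φ W := fun p hp => hL.1 p hp
  obtain ⟨w', hprod, hmap⟩ := hred.exists_normalWord_prod_eq d
  have h1 : PushoutI.ofCoprodI (φ := φ) W.prod = wordProd φ L := by
    simp only [CoprodI.Word.prod, map_list_prod, List.map_map, wordProd]
    congr 1
  have h2 : w'.prod = ((wordProd φ L) • (default : PushoutI.NormalWord d)).prod := by
    rw [PushoutI.NormalWord.prod_smul, hprod, h1]
    show _ = _ * (PushoutI.NormalWord.empty (d := d)).prod
    rw [PushoutI.NormalWord.prod_empty, mul_one]
  have h3 := PushoutI.NormalWord.prod_injective h2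
  rw [← h3]
  have := congrArg List.length hmap
  simpa using this

theorem reduced_flatten_replicate (l : List (Σ i, G i)) (hl : ReducedWord φ l)
    (hcyc : ∀ p q, l.head? = some p → l.getLast? = some q → 2 ≤ l.length → p.1 ≠ q.1)
    (h2 : 2 ≤ l.length) :
    ∀ m : ℕ, ReducedWord φ (List.replicate (m + 1) l).flatten ∧
      ((List.replicate (m + 1) l).flatten).head? = l.head? := by
  have hnil : l ≠ [] := by rintro rfl; simp at h2
  have hbdry : ∀ x ∈ l.getLast?, ∀ y ∈ l.head?, x.1 ≠ y.1 := by
    intro x hx y hy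
    exact (hcyc y x hy hx h2).symm
  intro m
  induction m with
  | zero => simpa [ReducedWord] using hl
  | succ n ih =>
    rw [List.replicate_succ, List.flatten_cons]
    refine ⟨⟨?_, ?_⟩, ?_⟩
    · intro p hp
      rw [List.mem_append] at hp
      rcases hp with hp | hp
      · exact hl.1 p hp
      · rcases List.mem_flatten.1 hp with ⟨s, hs, hps⟩
        rw [List.eq_of_mem_replicate hs] at hps
        exact hl.1 p hps
    · rw [List.Chain', List.isChain_append]
      refine ⟨hl.2, ih.1.2, ?_⟩
      intro x hx y hy
      rw [ih.2] at hy
      exact hbdry x hx y hy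
    · rw [List.head?_append_of_ne_nil _ hnil]

end AuxBool

theorem stmt2 {C : Type*} [Group C] {G : Bool → Type*} [∀ i, Group (G i)]
    (φ : ∀ i, C →* G i) (hφ : ∀ i, Function.Injective (φ i))
    (g : PushoutI φ) (i₀ : Bool) (x : G i₀)
    (hg : IsConj (PushoutI.of (φ := φ) i₀ x) g)
    (l : List (Σ i, G i)) (hl : CyclicallyReducedWord φ l)
    (hconj : IsConj g (wordProd φ l)) :
    l.length ≤ 1 := by
  by_contra hlen
  push_neg at hlen
  have h2 : 2 ≤ l.length := hlen
  obtain ⟨d⟩ := PushoutI.NormalWord.transversal_nonempty φ hφ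
  letI : ∀ i, DecidableEq (G i) := fun i => Classical.decEq _
  have hconj2 : IsConj (PushoutI.of (φ := φ) i₀ x) (wordProd φ l) := hg.trans hconj
  obtain ⟨c, hc⟩ := isConj_iff.1 hconj2
  obtain ⟨n₁, hn₁⟩ := exists_len_bound (d := d) c
  obtain ⟨n₂, hn₂⟩ := exists_len_bound (d := d) c⁻¹
  set N := n₁ + n₂ + 1 with hN
  have hpow : (wordProd φ l) ^ (N + 1) = c * PushoutI.of (φ := φ) i₀ (x ^ (N + 1)) * c⁻¹ := by
    rw [← hc, conj_pow, map_pow]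
  have hd0 : (default : PushoutI.NormalWord d).toList.length = 0 := rfl
  have hb : ((wordProd φ l) ^ (N + 1) • (default : PushoutI.NormalWord d)).toList.length ≤ N := by
    rw [hpow, mul_assoc, mul_smul, mul_smul]
    calc (c • (PushoutI.of (φ := φ) i₀ (x ^ (N + 1)) •
            (c⁻¹ • (default : PushoutI.NormalWord d)))).toList.length
        ≤ (PushoutI.of (φ := φ) i₀ (x ^ (N + 1)) •
            (c⁻¹ • (default : PushoutI.NormalWord d))).toList.length + n₁ := hn₁ _
      _ ≤ ((c⁻¹ • (default : PushoutI.NormalWord d)).toList.length + 1) + n₁ :=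
          Nat.add_le_add_right (len_of_smul _ _ _) n₁
      _ ≤ (((default : PushoutI.NormalWord d).toList.length + n₂) + 1) + n₁ :=
          Nat.add_le_add_right (Nat.add_le_add_right (hn₂ _) 1) n₁
      _ = N := by rw [hd0, hN]; ring
  have hjr := reduced_flatten_replicate l hl.1 hl.2 h2 N
  have hlen2 := len_wordProd (d := d) _ hjr.1
  rw [wordProd_flatten_replicate] at hlen2
  have hflat : (List.replicate (N + 1) l).flatten.length = (N + 1) * l.length := by
    simp [List.length_flatten, List.map_replicate, List.sum_replicate, smul_eq_mul]
  rw [hflat] at hlen2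
  rw [hlen2] at hb
  nlinarith
end

section
/- In an amalgamated free product G = A *_C B, let a₁ ∈ A, b₁,…,b_k ∈ B∖C, a₂,…,a_k ∈ A∖C, and suppose a ∈ A satisfies a₁⁻¹·a·a₁ ∉ C and b ∈ B satisfies b_k·b·b_k⁻¹ ∉ C. Set h = a₁b₁a₂b₂⋯a_k b_k and g = h·b·h⁻¹. Then the element a·g is conjugate in G to the element represented by the cyclically reduced word (a₁⁻¹ a a₁)·b₁·a₂·…·a_k·(b_k b b_k⁻¹)·a_k⁻¹·…·b₁⁻¹, and hence a·g is not conjugate to any element of A ∪ B. -/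
/-!
STATEMENT 3: In `G = A *_C B`, let `a₁ ∈ A`, `b₁,…,b_k ∈ B∖C`, `a₂,…,a_k ∈ A∖C`,
and suppose `a ∈ A` satisfies `a₁⁻¹ a a₁ ∉ C` and `b ∈ B` satisfies
`b_k b b_k⁻¹ ∉ C`.  Set `h = a₁b₁a₂b₂⋯a_k b_k` and `g = h b h⁻¹`.  Then `a * g`
is conjugate in `G` to the element represented by the cyclically reduced word
`(a₁⁻¹ a a₁)·b₁·a₂·…·a_k·(b_k b b_k⁻¹)·a_k⁻¹·…·b₁⁻¹`, and hence `a * g` is not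
conjugate to any element of `A ∪ B`.

We model `A *_C B` as `Monoid.PushoutI φ` over the index type `Bool`
(`A = G true`, `B = G false`), with injective structure maps `φ i : C →* G i`.
The letters `a₁,…,a_k` and `b₁,…,b_k` are given as functions `ℕ → _` (1-based).
-/

open Monoid

namespace Stmt3Aux

variable {ι : Type*} {G : ι → Type*} {H : Type*} [∀ i, Group (G i)] [Group H]
  {φ : ∀ i, H →* G i} [DecidableEq ι] [∀ i, DecidableEq (G i)]
  {d : PushoutI.NormalWord.Transversal φ}

open PushoutI PushoutI.NormalWord

theorem base_smul_toList (h : H) (w : NormalWord d) :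
    (base φ h • w).toList = w.toList := by
  rw [base_smul_def]

theorem len_of_smul_le (i : ι) (x : G i) (w : NormalWord d) :
    ((of (φ := φ) i x) • w).toList.length ≤ w.toList.length + 1 := by
  induction w using consRecOn generalizing x with
  | empty =>
      by_cases hx : x ∈ (φ i).range
      · obtain ⟨c, rfl⟩ := hx
        rw [of_apply_eq_base, base_smul_toList]
        exact Nat.le_succ _
      · have hfst : (empty : NormalWord d).fstIdx ≠ some i := by
          simp [CoprodI.Word.fstIdx, NormalWord.empty, CoprodI.Word.empty]
        rw [← cons_eq_smul x empty hfst hx, cons_toList]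
        simp
  | cons j g w hmw hgn hgr hw1 ih =>
      by_cases hij : i = j
      · subst hij
        have h1 : of (φ := φ) i x • (cons g w hmw hgr) = of (φ := φ) i (x * g) • w := by
          rw [cons_eq_smul, ← mul_smul, ← map_mul]
        rw [h1, cons_toList]
        exact le_trans (ih _) (by simp)
      · have hfst : (cons g w hmw hgr).fstIdx ≠ some i := by
          have : (cons g w hmw hgr).fstIdx = some j := by
            simp [CoprodI.Word.fstIdx, cons_toList]
          rw [this]
          exact fun hc => hij (Option.some.inj hc).symm
        by_cases hx : x ∈ (φ i).range
        · obtain ⟨c, rfl⟩ := hx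
          rw [of_apply_eq_base, base_smul_toList]
          exact Nat.le_succ _
        · rw [← cons_eq_smul x _ hfst hx, cons_toList]
          simp
  | base h w hw1 ih =>
      rw [← mul_smul]
      have h2 : of (φ := φ) i x * base φ h = of (φ := φ) i (x * φ i h) := by
        rw [map_mul, of_apply_eq_base]
      rw [h2, base_smul_toList]
      exact ih _

theorem len_prod_mul_le (nw : NormalWord d) (q : PushoutI φ) :
    ((nw.prod * q) • (empty : NormalWord d)).toList.length ≤
      nw.toList.length + (q • (empty : NormalWord d)).toList.length := by
  induction nw using consRecOn with
  | empty => simp [prod_empty]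
  | cons j g w hmw hgn hgr hw1 ih =>
      rw [prod_cons, mul_assoc, mul_smul]
      calc (of (φ := φ) j g • ((w.prod * q) • (empty : NormalWord d))).toList.length
          ≤ ((w.prod * q) • (empty : NormalWord d)).toList.length + 1 := len_of_smul_le _ _ _
        _ ≤ (w.toList.length + (q • (empty : NormalWord d)).toList.length) + 1 :=
            Nat.add_le_add_right ih 1
        _ = (cons g w hmw hgr).toList.length + (q • (empty : NormalWord d)).toList.length := by
            rw [cons_toList]; simp; omega
  | base h w hw1 ih =>
      have h1 : (base φ h • w).prod = base φ h * w.prod := prod_smul _ _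
      rw [h1, mul_assoc, mul_smul, base_smul_toList, base_smul_toList]
      exact ih

theorem len_mul_le (g q : PushoutI φ) :
    ((g * q) • (empty : NormalWord d)).toList.length ≤
      (g • (empty : NormalWord d)).toList.length +
        (q • (empty : NormalWord d)).toList.length := by
  have h1 : (g • (empty : NormalWord d)).prod = g := by
    rw [prod_smul, prod_empty, mul_one]
  calc ((g * q) • (empty : NormalWord d)).toList.length
      = (((g • (empty : NormalWord d)).prod * q) • (empty : NormalWord d)).toList.length := by
        rw [h1]
    _ ≤ _ := len_prod_mul_le _ _

theorem len_of_le (i : ι) (x : G i) :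
    (of (φ := φ) i x • (empty : NormalWord d)).toList.length ≤ 1 := by
  simpa using len_of_smul_le i x (empty : NormalWord d)

theorem len_wordProd (l : List (Σ i, G i)) (h1 : ∀ p ∈ l, p.2 ∉ (φ p.1).range)
    (h2 : l.Chain' fun p q => p.1 ≠ q.1) :
    (((l.map fun p => of (φ := φ) p.1 p.2).prod) • (empty : NormalWord d)).toList.length
      = l.length := by
  set W : CoprodI.Word G := ⟨l, fun p hp hone => h1 p hp (hone ▸ one_mem _), h2⟩ with hW
  have hred : Reduced φ W := fun p hp => h1 p hp
  obtain ⟨w', hprod, hmap⟩ := hred.exists_normalWord_prod_eq d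
  have hWprod : ofCoprodI (W.prod) = (l.map fun p => of (φ := φ) p.1 p.2).prod := by
    rw [CoprodI.Word.prod, map_list_prod]
    simp [hW, List.map_map, Function.comp_def, ofCoprodI_of]
  have : ((l.map fun p => of (φ := φ) p.1 p.2).prod) • (empty : NormalWord d) = w' := by
    rw [← hWprod, ← hprod, prod_smul_empty]
  rw [this]
  have := congrArg List.length hmap
  simpa using this

end Stmt3Aux

namespace Stmt3Aux2
open Monoid Function PushoutI PushoutI.NormalWord Stmt3Aux

variable {ι : Type*} {G : ι → Type*} {H : Type*} [∀ i, Group (G i)] [Group H]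
  {φ : ∀ i, H →* G i}

theorem flatten_replicate_prod {M : Type*} [Monoid M] {α : Type*} (f : α → M)
    (l : List α) (m : ℕ) :
    ((List.replicate m l).flatten.map f).prod = ((l.map f).prod) ^ m := by
  induction m with
  | zero => simp
  | succ m ih => rw [List.replicate_succ]; simp [pow_succ', ih]

theorem chain'_flatten_replicate {α : Type*} {R : α → α → Prop} (l : List α)
    (hc : l.Chain' R) (hcross : ∀ p ∈ l.getLast?, ∀ q ∈ l.head?, R p q) (m : ℕ) :
    ((List.replicate m l).flatten).Chain' R := by
  induction m with
  | zero => simp [List.Chain']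
  | succ m ih =>
      rw [List.replicate_succ, List.flatten_cons]
      simp only [List.Chain', List.isChain_append]
      refine ⟨hc, ih, ?_⟩
      intro p hp q hq
      rcases m with _ | m
      · simp at hq
      · rw [List.replicate_succ, List.flatten_cons, List.head?_append] at hq
        rcases l with _ | ⟨a, l'⟩
        · simp at hp
        · simp only [List.head?_cons, Option.or] at hq
          cases hq
          exact hcross p hp _ rfl

theorem not_isConj_factor [DecidableEq ι] [∀ i, DecidableEq (G i)]
    (hφ : ∀ i, Injective (φ i))
    (l : List (Σ i, G i)) (h1 : ∀ p ∈ l, p.2 ∉ (φ p.1).range)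
    (h2 : l.Chain' fun p q => p.1 ≠ q.1)
    (hcross : ∀ p ∈ l.getLast?, ∀ q ∈ l.head?, p.1 ≠ q.1)
    (hlen : 2 ≤ l.length) (i : ι) (x : G i) :
    ¬ IsConj (of (φ := φ) i x) ((l.map fun p => of (φ := φ) p.1 p.2).prod) := by
  intro hconj
  obtain ⟨d⟩ := transversal_nonempty φ hφ
  rw [isConj_iff] at hconj
  obtain ⟨c, hc⟩ := hconj
  have hmem : ∀ m : ℕ, ∀ p ∈ (List.replicate m l).flatten, p.2 ∉ (φ p.1).range := by
    intro m p hp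
    rw [List.mem_flatten] at hp
    obtain ⟨s, hs, hps⟩ := hp
    rw [List.eq_of_mem_replicate hs] at hps
    exact h1 p hps
  have key : ∀ m : ℕ, m * l.length ≤ (c • (empty : NormalWord d)).toList.length +
      ((of (φ := φ) i (x ^ m) * c⁻¹) • (empty : NormalWord d)).toList.length := by
    intro m
    have hu : ((l.map fun p => of (φ := φ) p.1 p.2).prod) ^ m
        = c * (of (φ := φ) i (x ^ m) * c⁻¹) := by
      rw [← hc, map_pow, conj_pow, mul_assoc]
    calc m * l.length
        = ((((l.map fun p => of (φ := φ) p.1 p.2).prod) ^ m) •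
            (empty : NormalWord d)).toList.length := by
          rw [← flatten_replicate_prod,
            len_wordProd _ (hmem m) (chain'_flatten_replicate l h2 hcross m)]
          simp [List.length_flatten, List.map_replicate, mul_comm]
      _ = ((c * (of (φ := φ) i (x ^ m) * c⁻¹)) • (empty : NormalWord d)).toList.length := by
          rw [hu]
      _ ≤ _ := len_mul_le _ _
  have key2 : ∀ m : ℕ, ((of (φ := φ) i (x ^ m) * c⁻¹) • (empty : NormalWord d)).toList.length
      ≤ 1 + (c⁻¹ • (empty : NormalWord d)).toList.length :=
    fun m => le_trans (len_mul_le _ _) (Nat.add_le_add_right (len_of_le _ _) _)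
  set m := (c • (empty : NormalWord d)).toList.length +
    (c⁻¹ • (empty : NormalWord d)).toList.length + 2 with hm
  have e1 := key m
  have e2 := key2 m
  have e3 : m * 2 ≤ m * l.length := Nat.mul_le_mul_left m hlen
  omega

end Stmt3Aux2

namespace Stmt3Bool

theorem flatMap_const {α β : Type*} (l : List α) (c : List β) :
    (l.flatMap fun _ => c) = (List.replicate l.length c).flatten := by
  induction l with
  | nil => simp
  | cons a l ih => simp [List.replicate_succ, ih]

theorem bool_shape : ∀ (n : ℕ) (Z : List Bool),
    (true :: (((List.replicate n [false, true]).flatten ++ [false]) ++ Z) : List Bool) =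
      (List.replicate (n + 1) [true, false]).flatten ++ Z := by
  intro n
  induction n with
  | zero => intro Z; simp [List.replicate_succ]
  | succ n ih =>
      intro Z
      calc true :: (((List.replicate (n + 1) [false, true]).flatten ++ [false]) ++ Z)
          = [true, false] ++
            (true :: (((List.replicate n [false, true]).flatten ++ [false]) ++ Z)) := by
            simp [List.replicate_succ]
        _ = [true, false] ++ ((List.replicate (n + 1) [true, false]).flatten ++ Z) := by rw [ih]
        _ = (List.replicate (n + 2) [true, false]).flatten ++ Z := by
            simp [List.replicate_succ]

theorem chainF : ∀ m : ℕ, (false :: (List.replicate m ([true, false] : List Bool)).flatten).Chain' Ne := by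
  intro m
  induction m with
  | zero => simp [List.Chain']
  | succ m ih =>
      rw [List.replicate_succ, List.flatten_cons]
      simp only [List.cons_append, List.Chain', List.isChain_cons_cons] at *
      exact ⟨by simp, by simp, ih⟩

theorem chainT : ∀ m : ℕ, ((List.replicate m ([true, false] : List Bool)).flatten).Chain' Ne := by
  intro m
  cases m with
  | zero => simp [List.Chain']
  | succ m =>
      rw [List.replicate_succ, List.flatten_cons]
      simp only [List.cons_append, List.Chain', List.isChain_cons_cons]
      exact ⟨by simp, chainF m⟩

theorem lastF : ∀ m : ℕ, ((List.replicate (m + 1) ([true, false] : List Bool)).flatten).getLast? = some false := by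
  intro m
  induction m with
  | zero => simp
  | succ m ih =>
      rw [List.replicate_succ, List.flatten_cons, List.getLast?_append, ih]
      rfl

variable {C : Type*} [Group C] {G : Bool → Type*} [∀ i, Group (G i)]
    (φ : ∀ i, C →* G i) (A : ℕ → G true) (B : ℕ → G false)

theorem wordProd_append (l₁ l₂ : List (Σ i, G i)) :
    wordProd φ (l₁ ++ l₂) = wordProd φ l₁ * wordProd φ l₂ := by
  simp [wordProd]

theorem wordProd_cons (p : (Σ i, G i)) (l : List (Σ i, G i)) :
    wordProd φ (p :: l) = PushoutI.of (φ := φ) p.1 p.2 * wordProd φ l := by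
  simp [wordProd]

theorem wordProd_singleton (p : (Σ i, G i)) :
    wordProd φ [p] = PushoutI.of (φ := φ) p.1 p.2 := by
  simp [wordProd]

theorem inv_part : ∀ l : List ℕ,
    wordProd φ (l.reverse.flatMap fun j =>
        [⟨true, (A (j + 2))⁻¹⟩, ⟨false, (B (j + 1))⁻¹⟩]) =
      (wordProd φ (l.flatMap fun j => [⟨false, B (j + 1)⟩, ⟨true, A (j + 2)⟩]))⁻¹ := by
  intro l
  induction l with
  | nil => simp [wordProd]
  | cons j l ih =>
      rw [List.reverse_cons, List.flatMap_append, wordProd_append, ih, List.flatMap_cons,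
        wordProd_append]
      simp [wordProd, mul_assoc, mul_inv_rev]

theorem h_decomp : ∀ n : ℕ,
    ((List.range (n + 1)).map fun i =>
        PushoutI.of (φ := φ) true (A (i + 1)) * PushoutI.of (φ := φ) false (B (i + 1))).prod =
      PushoutI.of (φ := φ) true (A 1) *
        wordProd φ ((List.range n).flatMap fun j => [⟨false, B (j + 1)⟩, ⟨true, A (j + 2)⟩]) *
        PushoutI.of (φ := φ) false (B (n + 1)) := by
  intro n
  induction n with
  | zero => simp [wordProd, List.range_succ]
  | succ n ih =>
      rw [List.range_succ, List.map_append, List.prod_append, ih]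
      conv_rhs => rw [List.range_succ, List.flatMap_append, wordProd_append]
      simp [wordProd, mul_assoc]

end Stmt3Bool


theorem stmt3 {C : Type*} [Group C] {G : Bool → Type*} [∀ i, Group (G i)]
    (φ : ∀ i, C →* G i) (hφ : ∀ i, Function.Injective (φ i))
    (k : ℕ) (hk : 1 ≤ k)
    (A : ℕ → G true) (B : ℕ → G false)
    (hA : ∀ i, 2 ≤ i → i ≤ k → A i ∉ (φ true).range)
    (hB : ∀ i, 1 ≤ i → i ≤ k → B i ∉ (φ false).range)
    (a : G true) (ha : (A 1)⁻¹ * a * A 1 ∉ (φ true).range)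
    (b : G false) (hb : B k * b * (B k)⁻¹ ∉ (φ false).range)
    (h g : PushoutI φ)
    (hh : h = ((List.range k).map fun i =>
        PushoutI.of (φ := φ) true (A (i + 1)) *
        PushoutI.of (φ := φ) false (B (i + 1))).prod)
    (hgdef : g = h * PushoutI.of (φ := φ) false b * h⁻¹)
    (w : List (Σ i, G i))
    (hw : w = ⟨true, (A 1)⁻¹ * a * A 1⟩ ::
        (((List.range (k - 1)).flatMap fun j =>
            [⟨false, B (j + 1)⟩, ⟨true, A (j + 2)⟩]) ++
          [⟨false, B k * b * (B k)⁻¹⟩] ++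
          ((List.range (k - 1)).reverse.flatMap fun j =>
            [⟨true, (A (j + 2))⁻¹⟩, ⟨false, (B (j + 1))⁻¹⟩]))) :
    CyclicallyReducedWord φ w ∧
    IsConj (PushoutI.of (φ := φ) true a * g) (wordProd φ w) ∧
    (∀ i, ¬ ∃ x : G i, IsConj (PushoutI.of (φ := φ) i x)
        (PushoutI.of (φ := φ) true a * g)) := by
  classical
  obtain ⟨n, rfl⟩ : ∃ n, k = n + 1 := ⟨k - 1, (Nat.succ_pred_eq_of_pos hk).symm⟩
  rw [Nat.add_sub_cancel] at hw
  -- the Boolean index pattern of `w`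
  have hmapfst : w.map Sigma.fst = (List.replicate (n + n + 1) [true, false]).flatten := by
    rw [show n + n + 1 = (n + 1) + n from by omega, hw]
    simp only [List.map_cons, List.map_append, List.map_flatMap, List.map_nil]
    rw [Stmt3Bool.flatMap_const, Stmt3Bool.flatMap_const]
    simp only [List.length_range, List.length_reverse]
    rw [List.replicate_add, List.flatten_append, ← Stmt3Bool.bool_shape]
  have hchain : w.Chain' (fun p q => p.1 ≠ q.1) := by
    have h1 := Stmt3Bool.chainT (n + n + 1)
    rw [← hmapfst] at h1
    exact (List.isChain_map Sigma.fst).1 h1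
  have hhead : w.head? = some ⟨true, (A 1)⁻¹ * a * A 1⟩ := by rw [hw]; rfl
  have hlast : ∀ q, w.getLast? = some q → q.1 = false := by
    intro q hq
    have h1 : (w.map Sigma.fst).getLast? = some false := by
      rw [hmapfst]
      exact Stmt3Bool.lastF (n + n)
    rw [List.getLast?_map, hq] at h1
    simpa using h1
  have hmem : ∀ p ∈ w, p.2 ∉ (φ p.1).range := by
    intro p hp
    rw [hw] at hp
    simp only [List.mem_cons, List.mem_append, List.mem_flatMap, List.mem_reverse,
      List.mem_range, List.mem_singleton, List.mem_insert_iff, List.not_mem_nil,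
      or_false] at hp
    rcases hp with rfl | ⟨⟨j, hj, hp⟩ | rfl⟩ | ⟨j, hj, hp⟩
    · exact ha
    · rcases hp with rfl | rfl
      · exact hB (j + 1) (by omega) (by omega)
      · exact hA (j + 2) (by omega) (by omega)
    · exact hb
    · rcases hp with rfl | rfl
      · simpa only [inv_mem_iff] using hA (j + 2) (by omega) (by omega)
      · simpa only [inv_mem_iff] using hB (j + 1) (by omega) (by omega)
  have hwlen : w.length = (n + n + 1) * 2 := by
    rw [← List.length_map (as := w) Sigma.fst, hmapfst]
    simp [List.length_flatten, List.map_replicate, List.sum_replicate, smul_eq_mul, mul_comm]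
  have hkey : wordProd φ w =
      (PushoutI.of (φ := φ) true (A 1))⁻¹ *
        (PushoutI.of (φ := φ) true a * g) * PushoutI.of (φ := φ) true (A 1) := by
    rw [hw, Stmt3Bool.wordProd_cons, Stmt3Bool.wordProd_append, Stmt3Bool.wordProd_append,
      Stmt3Bool.inv_part, Stmt3Bool.wordProd_singleton, hgdef, hh,
      Stmt3Bool.h_decomp φ A B n]
    simp only [map_mul, map_inv, mul_inv_rev, inv_inv]
    group
  have hconj : IsConj (PushoutI.of (φ := φ) true a * g) (wordProd φ w) := by
    rw [isConj_iff]
    exact ⟨(PushoutI.of (φ := φ) true (A 1))⁻¹, by rw [inv_inv, hkey]⟩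
  refine ⟨⟨⟨hmem, hchain⟩, ?_⟩, hconj, ?_⟩
  · intro p q hp hq _
    rw [hhead] at hp
    obtain rfl := Option.some.inj hp
    rw [hlast q hq]
    simp
  · rintro i ⟨x, hconjx⟩
    have h2 : IsConj (PushoutI.of (φ := φ) i x) ((w.map fun p =>
        PushoutI.of (φ := φ) p.1 p.2).prod) := hconjx.trans hconj
    refine Stmt3Aux2.not_isConj_factor hφ w hmem hchain ?_ ?_ i x h2
    · intro p hp q hq
      rw [Option.mem_def, hhead] at hq
      obtain rfl := Option.some.inj hq
      rw [hlast p (Option.mem_def.1 hp)]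
      simp
    · omega
end
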